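/- arXiv:quant-ph/0307150 — 5 statements merged into one kernel-verified Lean document; each statement's English description precedes it below -/
import Mathlib

section
/- Let a state be reachable if it is obtained from an initial basis configuration |H;t⟩ (a single definite configuration, t a λ_q term) by a finite sequence of steps of the operational model of λ_q. Then any two configurations in the support of a reachable state are congruent: their history tracks have the same length, and corresponding entries (and the computational registers) coincide symbol by symbol except possibly at positions containing the constants 0 or 1. -/
namespace LambdaQ

/-- Constants of the quantum lambda calculus: bits, gate symbols, placeholder. -/
inductive Const where
  | zero | one | hadamard | phaseS | gateR | cnot | gateX | gateY | gateZ | placeholder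
  deriving DecidableEq

/-- Terms of the quantum lambda calculus λ_q. -/
inductive Term where
  | var (x : ℕ)
  | lam (x : ℕ) (body : Term)
  | app (t₁ t₂ : Term)
  | const (c : Const)
  | bang (t : Term)
  | lamBang (x : ℕ) (body : Term)
  deriving DecidableEq

open Term

/-- The placeholder symbol ⊥. -/
def ph : Term := const .placeholder

def freeVars : Term → Finset ℕ
  | var x => {x}
  | lam x b => freeVars b \ {x}
  | app a b => freeVars a ∪ freeVars b
  | const _ => ∅
  | bang t => freeVars t
  | lamBang x b => freeVars b \ {x}

def allVars : Term → Finset ℕ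
  | var x => {x}
  | lam x b => insert x (allVars b)
  | app a b => allVars a ∪ allVars b
  | const _ => ∅
  | bang t => allVars t
  | lamBang x b => insert x (allVars b)

/-- Naive renaming of free occurrences of `y` by `z`. -/
def rename (y z : ℕ) : Term → Term
  | var x => if x = y then var z else var x
  | lam x b => if x = y then lam x b else lam x (rename y z b)
  | app a b => app (rename y z a) (rename y z b)
  | const c => const c
  | bang t => bang (rename y z t)
  | lamBang x b => if x = y then lamBang x b else lamBang x (rename y z b)

def size : Term → ℕ
  | var _ => 1
  | lam _ b => size b + 1
  | app a b => size a + size b + 1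
  | const _ => 1
  | bang t => size t + 1
  | lamBang _ b => size b + 1

theorem size_rename (y z : ℕ) : ∀ t, size (rename y z t) = size t := by
  intro t
  induction t with
  | var x => simp only [rename]; split <;> rfl
  | lam x b ih => simp only [rename]; split <;> simp [size, ih]
  | app a b iha ihb => simp [rename, size, iha, ihb]
  | const c => rfl
  | bang t ih => simp [rename, size, ih]
  | lamBang x b ih => simp only [rename]; split <;> simp [size, ih]

/-- A variable not occurring in the finite set `s`. -/
def fresh (s : Finset ℕ) : ℕ := (s.sup id) + 1

/-- Capture-avoiding substitution `subst v x t = t[v/x]`. -/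
def subst (v : Term) (x : ℕ) : Term → Term
  | var y => if y = x then v else var y
  | const c => const c
  | app a b => app (subst v x a) (subst v x b)
  | bang t => bang (subst v x t)
  | lam y b =>
      if y = x then lam y b
      else if y ∈ freeVars v ∧ x ∈ freeVars b then
        lam (fresh (allVars b ∪ freeVars v ∪ {x}))
          (subst v x (rename y (fresh (allVars b ∪ freeVars v ∪ {x})) b))
      else lam y (subst v x b)
  | lamBang y b =>
      if y = x then lamBang y b
      else if y ∈ freeVars v ∧ x ∈ freeVars b then
        lamBang (fresh (allVars b ∪ freeVars v ∪ {x}))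
          (subst v x (rename y (fresh (allVars b ∪ freeVars v ∪ {x})) b))
      else lamBang y (subst v x b)
  termination_by t => size t
  decreasing_by all_goals (simp [size, size_rename]; try omega)

/-- Values of λ_q: variables, constants, abstractions, !-suspensions. -/
def IsValue : Term → Prop
  | var _ => True
  | const _ => True
  | lam _ _ => True
  | lamBang _ _ => True
  | bang _ => True
  | app _ _ => False

/-- The skeleton Ē_x: replace every maximal subterm not containing x free
by the placeholder ⊥, keeping x. -/
def skel (x : ℕ) : Term → Term
  | var y => if y = x then var y else ph
  | lam y b => if y ≠ x ∧ x ∈ freeVars b then lam y (skel x b) else ph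
  | lamBang y b => if y ≠ x ∧ x ∈ freeVars b then lamBang y (skel x b) else ph
  | app a b => if x ∈ freeVars a ∪ freeVars b then app (skel x a) (skel x b) else ph
  | bang t => if x ∈ freeVars t then bang (skel x t) else ph
  | const _ => ph

/-- Scott-encoded empty list  nil ≡ λ!x.λ!y.(x id). -/
def idT : Term := lam 20 (var 20)
def nilT : Term := lamBang 0 (lamBang 1 (app (var 0) idT))
/-- cons ≡ λh.λt.λ!x.λ!y.((y h) t). -/
def consT : Term := lam 2 (lam 3 (lamBang 0 (lamBang 1 (app (app (var 1) (var 2)) (var 3)))))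
/-- The (unevaluated) pair (a, b) ≡ cons a (cons b nil). -/
def pairE (a b : Term) : Term := app (app consT a) (app (app consT b) nilT)
/-- The evaluated form of (cons a b). -/
def pairV (a b : Term) : Term := lamBang 0 (lamBang 1 (app (app (var 1) a) b))
/-- The evaluated pair value (a, b). -/
def mkPair (a b : Term) : Term := pairV a (pairV b nilT)

/-- The bit constants. -/
def bit : Bool → Term := fun b => const (if b then .one else .zero)

/-- Output of the Hadamard gate on a bit. -/
noncomputable def hadOut : Bool → (Term →₀ ℂ)
  | false => (Real.sqrt 2 : ℂ)⁻¹ • (Finsupp.single (bit false) 1 + Finsupp.single (bit true) 1)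
  | true  => (Real.sqrt 2 : ℂ)⁻¹ • (Finsupp.single (bit false) 1 - Finsupp.single (bit true) 1)

/-- Action of the primitive gate symbols on (encoded) bit values:
`GateApp g φ s` means U|φ⟩ = s for the unitary U named by g. -/
inductive GateApp : Const → Term → (Term →₀ ℂ) → Prop
  | had (b : Bool) : GateApp .hadamard (bit b) (hadOut b)
  | gX (b : Bool) : GateApp .gateX (bit b) (Finsupp.single (bit !b) 1)
  | gY (b : Bool) : GateApp .gateY (bit b)
      ((if b then -Complex.I else Complex.I) • Finsupp.single (bit !b) 1)
  | gZ (b : Bool) : GateApp .gateZ (bit b)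
      ((if b then (-1 : ℂ) else 1) • Finsupp.single (bit b) 1)
  | gS (b : Bool) : GateApp .phaseS (bit b)
      ((if b then Complex.I else 1) • Finsupp.single (bit b) 1)
  | gR (b : Bool) : GateApp .gateR (bit b)
      ((if b then Complex.exp (Complex.I * Real.pi / 4) else 1) • Finsupp.single (bit b) 1)
  | gCnot (a b : Bool) : GateApp .cnot (mkPair (bit a) (bit b))
      (Finsupp.single (mkPair (bit a) (bit (xor a b))) 1)

/-- One step of reduction of a term, producing a history entry and a
superposition of resulting terms (operational model of λ_q). -/
inductive SubStep : Term → Term → (Term →₀ ℂ) → Prop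
  | app1 {t₁ h s} (t₂) : SubStep t₁ h s →
      SubStep (app t₁ t₂) (app h ph) (s.mapDomain fun u => app u t₂)
  | app2 {v t₂ h s} : IsValue v → SubStep t₂ h s →
      SubStep (app v t₂) (app ph h) (s.mapDomain fun u => app v u)
  | beta {x E v} : IsValue v →
      SubStep (app (lam x E) v) (app (lam x (skel x E)) ph) (Finsupp.single (subst v x E) 1)
  | bangBeta1 {x E t'} : x ∈ freeVars E →
      SubStep (app (lamBang x E) (bang t')) (app (lamBang x (skel x E)) ph)
        (Finsupp.single (subst t' x E) 1)
  | bangBeta2 {x E t'} : x ∉ freeVars E →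
      SubStep (app (lamBang x E) (bang t')) (app (lamBang x ph) (bang t')) (Finsupp.single E 1)
  | gate {g φ s} : GateApp g φ s →
      SubStep (app (const g) φ) (app (const g) ph) s

/-- A configuration: history track followed by the computational register. -/
abbrev Config := List Term × Term

/-- A state: finitely supported complex linear combination of configurations. -/
abbrev QState := Config →₀ ℂ

/-- One step of the operational model on a single configuration, producing a state. -/
inductive ConfStep : Config → QState → Prop
  | sub {H t h s} : SubStep t h s →
      ConfStep (H, t) (s.mapDomain fun u => (H ++ [h], u))
  | idStep {H t} : (∀ h s, ¬ SubStep t h s) →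
      ConfStep (H, t) (Finsupp.single (H ++ [ph], t) 1)

/-- One step of the operational model of λ_q, extended linearly to states. -/
def StateStep (ψ ψ' : QState) : Prop :=
  ∃ F : Config → QState, (∀ c ∈ ψ.support, ConfStep c (F c)) ∧
    ψ' = ψ.sum fun c a => a • F c

/-- The register reduction rules of λ_q on a single term, producing a
superposition of terms. -/
inductive RegStep : Term → (Term →₀ ℂ) → Prop
  | app1 {t₁ s} (t₂) : RegStep t₁ s → RegStep (app t₁ t₂) (s.mapDomain fun u => app u t₂)
  | app2 {v t₂ s} : IsValue v → RegStep t₂ s → RegStep (app v t₂) (s.mapDomain fun u => app v u)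
  | beta {x E v} : IsValue v → RegStep (app (lam x E) v) (Finsupp.single (subst v x E) 1)
  | bangBeta {x E t'} : RegStep (app (lamBang x E) (bang t')) (Finsupp.single (subst t' x E) 1)
  | gate {g φ s} : GateApp g φ s → RegStep (app (const g) φ) s

/-- The register reduction rules extended linearly to superpositions of terms. -/
def RegStepS (c c' : Term →₀ ℂ) : Prop :=
  ∃ F : Term → (Term →₀ ℂ), (∀ t ∈ c.support, RegStep t (F t)) ∧
    c' = c.sum fun t a => a • F t

/-- Congruence of terms: they coincide symbol by symbol except possibly at
positions containing the constants 0 or 1. -/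
inductive Congr : Term → Term → Prop
  | bit {c c'} : (c = .zero ∨ c = .one) → (c' = .zero ∨ c' = .one) →
      Congr (const c) (const c')
  | var (x) : Congr (var x) (var x)
  | const (c) : Congr (const c) (const c)
  | lam {b b'} (x) : Congr b b' → Congr (lam x b) (lam x b')
  | lamBang {b b'} (x) : Congr b b' → Congr (lamBang x b) (lamBang x b')
  | app {a a' b b'} : Congr a a' → Congr b b' → Congr (app a b) (app a' b')
  | bang {t t'} : Congr t t' → Congr (bang t) (bang t')


/-- Configurations are congruent if their history tracks have the same length
with corresponding entries congruent, and their registers are congruent. -/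
def ConfigCongr (c c' : Config) : Prop :=
  List.Forall₂ Congr c.1 c'.1 ∧ Congr c.2 c'.2

/-!
Which rule of the operational model fires on a term does not depend on the values of its bits:
values are closed under congruence, the side condition of `!β` and the skeleton `Ē_x` only see
free variables, and every gate accepts any bit (or pair of bits). The rules are moreover
deterministic on terms, substitution respects congruence, and a gate returns a bit (or pair of
bits) congruent to its input. Hence congruent configurations step by the same rule, append
congruent history entries, and reach states whose supports are pairwise congruent; induction
along the reduction sequence, starting from the single configuration `|H;t⟩`, concludes.
-/

namespace Congr

theorem refl : ∀ t, Congr t t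
  | .var x => .var x
  | .lam x b => .lam x (refl b)
  | .app a b => .app (refl a) (refl b)
  | .const c => .const c
  | .bang t => .bang (refl t)
  | .lamBang x b => .lamBang x (refl b)

variable {a b c : Term}

theorem symm (h : Congr a b) : Congr b a := by
  induction h with
  | bit h₁ h₂ => exact .bit h₂ h₁
  | var x => exact .var x
  | const c => exact .const c
  | lam x _ ih => exact .lam x ih
  | lamBang x _ ih => exact .lamBang x ih
  | app _ _ ih₁ ih₂ => exact .app ih₁ ih₂
  | bang _ ih => exact .bang ih

theorem trans (h₁ : Congr a b) (h₂ : Congr b c) : Congr a c := by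
  induction h₁ generalizing c with
  | bit ha hb => cases h₂ with
    | bit _ hc => exact .bit ha hc
    | const => exact .bit ha hb
  | var | const => exact h₂
  | lam x _ ih => cases h₂ with | lam _ h => exact .lam x (ih h)
  | lamBang x _ ih => cases h₂ with | lamBang _ h => exact .lamBang x (ih h)
  | app _ _ ih₁ ih₂ => cases h₂ with | app h h' => exact .app (ih₁ h) (ih₂ h')
  | bang _ ih => cases h₂ with | bang h => exact .bang (ih h)

theorem freeVars_eq (h : Congr a b) : freeVars a = freeVars b := by
  induction h <;> simp [freeVars, *]

theorem allVars_eq (h : Congr a b) : allVars a = allVars b := by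
  induction h <;> simp [allVars, *]

theorem isValue_iff (h : Congr a b) : IsValue a ↔ IsValue b := by
  cases h <;> rfl

theorem skel_eq (x : ℕ) (h : Congr a b) : skel x a = skel x b := by
  induction h with
  | bit | var | const => rfl
  | lam y h ih | lamBang y h ih => simp only [skel, h.freeVars_eq, ih]
  | app h₁ h₂ ih₁ ih₂ => simp only [skel, h₁.freeVars_eq, h₂.freeVars_eq, ih₁, ih₂]
  | bang h ih => simp only [skel, h.freeVars_eq, ih]

theorem rename (y z : ℕ) (h : Congr a b) : Congr (rename y z a) (rename y z b) := by
  induction h with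
  | bit h₁ h₂ => exact .bit h₁ h₂
  | var x => exact .refl _
  | const c => exact .const c
  | lam x h ih =>
    simp only [LambdaQ.rename]; split <;> [exact .lam x h; exact .lam x ih]
  | lamBang x h ih =>
    simp only [LambdaQ.rename]; split <;> [exact .lamBang x h; exact .lamBang x ih]
  | app _ _ ih₁ ih₂ => exact .app ih₁ ih₂
  | bang _ ih => exact .bang ih

theorem subst (h : Congr a b) (x : ℕ) {v v' : Term} (hv : Congr v v') :
    Congr (subst v x a) (subst v' x b) := by
  -- `case7` and `case10` are the abstractions whose bound variable is renamed apart
  induction a using subst.induct v x generalizing b with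
  | case1 => cases h; simpa only [LambdaQ.subst, if_true] using hv
  | case2 y hyx => cases h; simpa only [LambdaQ.subst, if_neg hyx] using .refl _
  | case3 =>
    obtain ⟨c', rfl⟩ : ∃ c', b = Term.const c' := by cases h <;> exact ⟨_, rfl⟩
    simpa only [LambdaQ.subst] using h
  | case4 _ _ ih₁ ih₂ =>
    cases h with | app h₁ h₂ => simpa only [LambdaQ.subst] using .app (ih₁ h₁) (ih₂ h₂)
  | case5 _ ih => cases h with | bang h => simpa only [LambdaQ.subst] using .bang (ih h)
  | case6 => cases h with | lam _ h => simpa only [LambdaQ.subst, if_true] using .lam _ h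
  | case9 => cases h with | lamBang _ h => simpa only [LambdaQ.subst, if_true] using .lamBang _ h
  | case7 _ _ hyx hc ih =>
    cases h with
    | lam _ h =>
      simp only [LambdaQ.subst, hyx, ← hv.freeVars_eq, ← h.freeVars_eq, ← h.allVars_eq,
        if_pos hc]
      exact .lam _ (ih (h.rename _ _))
  | case8 _ _ hyx hc ih =>
    cases h with
    | lam _ h =>
      simp only [LambdaQ.subst, hyx, ← hv.freeVars_eq, ← h.freeVars_eq, if_neg hc]
      exact .lam _ (ih h)
  | case10 _ _ hyx hc ih =>
    cases h with
    | lamBang _ h =>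
      simp only [LambdaQ.subst, hyx, ← hv.freeVars_eq, ← h.freeVars_eq, ← h.allVars_eq,
        if_pos hc]
      exact .lamBang _ (ih (h.rename _ _))
  | case11 _ _ hyx hc ih =>
    cases h with
    | lamBang _ h =>
      simp only [LambdaQ.subst, hyx, ← hv.freeVars_eq, ← h.freeVars_eq, if_neg hc]
      exact .lamBang _ (ih h)

end Congr

theorem congr_bit (b b' : Bool) : Congr (bit b) (bit b') :=
  .bit (by cases b <;> simp) (by cases b' <;> simp)

theorem congr_mkPair {a a' b b' : Term} (ha : Congr a a') (hb : Congr b b') :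
    Congr (mkPair a b) (mkPair a' b') :=
  .lamBang 0 (.lamBang 1 (.app (.app (.var 1) ha)
    (.lamBang 0 (.lamBang 1 (.app (.app (.var 1) hb) (.refl nilT))))))

theorem exists_eq_bit_of_congr {b : Bool} {c : Term} (h : Congr (bit b) c) :
    ∃ b', c = bit b' := by
  cases h with
  | bit _ hc => rcases hc with rfl | rfl; exacts [⟨false, rfl⟩, ⟨true, rfl⟩]
  | const => exact ⟨b, rfl⟩

theorem eq_nilT_of_congr {c : Term} (h : Congr nilT c) : c = nilT :=
  match c, h with
  | _, .lamBang _ (.lamBang _ (.app (.var _) (.lam _ (.var _)))) => rfl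

theorem exists_eq_mkPair_of_congr {b₁ b₂ : Bool} {c : Term}
    (h : Congr (mkPair (bit b₁) (bit b₂)) c) :
    ∃ b₁' b₂', c = mkPair (bit b₁') (bit b₂') :=
  match c, h with
  | _, .lamBang _ (.lamBang _ (.app (.app (.var _) h₁)
      (.lamBang _ (.lamBang _ (.app (.app (.var _) h₂) hnil))))) => by
    obtain ⟨b₁', rfl⟩ := exists_eq_bit_of_congr h₁
    obtain ⟨b₂', rfl⟩ := exists_eq_bit_of_congr h₂
    exact ⟨b₁', b₂', by rw [eq_nilT_of_congr hnil]; rfl⟩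

theorem bit_injective : Function.Injective bit := by
  intro b b' h
  cases b <;> cases b' <;> simp_all [bit]

theorem support_hadOut_subset (b : Bool) : (hadOut b).support ⊆ {bit false, bit true} := by
  cases b <;> refine Finsupp.support_smul.trans ?_
  · exact Finsupp.support_add.trans (Finset.union_subset_union
      Finsupp.support_single_subset Finsupp.support_single_subset)
  · exact Finsupp.support_sub.trans (Finset.union_subset_union
      Finsupp.support_single_subset Finsupp.support_single_subset)

namespace GateApp

variable {g : Const} {φ φ' : Term} {s s' : Term →₀ ℂ}

theorem isValue (h : GateApp g φ s) : IsValue φ := by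
  cases h <;> trivial

theorem eq_of_congr_const (h : GateApp g φ s) {c : Term} (hc : Congr (const g) c) :
    c = const g := by
  cases hc with
  | bit hg => cases h <;> simp at hg
  | const => rfl

theorem exists_of_congr (h : GateApp g φ s) (hc : Congr φ φ') : ∃ s', GateApp g φ' s' := by
  cases h with
  | had b => obtain ⟨b', rfl⟩ := exists_eq_bit_of_congr hc; exact ⟨_, .had b'⟩
  | gX b => obtain ⟨b', rfl⟩ := exists_eq_bit_of_congr hc; exact ⟨_, .gX b'⟩
  | gY b => obtain ⟨b', rfl⟩ := exists_eq_bit_of_congr hc; exact ⟨_, .gY b'⟩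
  | gZ b => obtain ⟨b', rfl⟩ := exists_eq_bit_of_congr hc; exact ⟨_, .gZ b'⟩
  | gS b => obtain ⟨b', rfl⟩ := exists_eq_bit_of_congr hc; exact ⟨_, .gS b'⟩
  | gR b => obtain ⟨b', rfl⟩ := exists_eq_bit_of_congr hc; exact ⟨_, .gR b'⟩
  | gCnot a b =>
    obtain ⟨a', b', rfl⟩ := exists_eq_mkPair_of_congr hc; exact ⟨_, .gCnot a' b'⟩

theorem unique (h : GateApp g φ s) (h' : GateApp g φ s') : s = s' := by
  generalize hφ : φ = φ' at h'
  cases h <;> cases h'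
  case gCnot.gCnot =>
    simp only [mkPair, pairV, Term.lamBang.injEq, Term.app.injEq, bit_injective.eq_iff,
      true_and, and_true] at hφ
    obtain ⟨rfl, rfl⟩ := hφ
    rfl
  all_goals obtain rfl := bit_injective hφ; rfl

theorem congr_of_mem_support (h : GateApp g φ s) {u : Term} (hu : u ∈ s.support) :
    Congr u φ := by
  cases h with
  | had b =>
    rcases Finset.mem_insert.mp (support_hadOut_subset b hu) with rfl | hu
    · exact congr_bit _ _
    · obtain rfl := Finset.mem_singleton.mp hu; exact congr_bit _ _
  | gX b =>
    obtain rfl := Finset.mem_singleton.mp (Finsupp.support_single_subset hu)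
    exact congr_bit _ _
  | gCnot a b =>
    obtain rfl := Finset.mem_singleton.mp (Finsupp.support_single_subset hu)
    exact congr_mkPair (congr_bit _ _) (congr_bit _ _)
  | _ =>
    obtain rfl := Finset.mem_singleton.mp (Finsupp.support_single_subset (Finsupp.support_smul hu))
    exact congr_bit _ _

end GateApp

section SupportRel

variable {α β γ δ R M : Type*}

def SupportRel [Zero M] (r : α → β → Prop) (f : α →₀ M) (g : β →₀ M) : Prop :=
  ∀ a ∈ f.support, ∀ b ∈ g.support, r a b

theorem supportRel_single [Zero M] {r : α → β → Prop} {a : α} {b : β} (h : r a b)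
    (m n : M) : SupportRel r (Finsupp.single a m) (Finsupp.single b n) := by
  intro a' ha' b' hb'
  rw [Finset.mem_singleton.mp (Finsupp.support_single_subset ha'),
    Finset.mem_singleton.mp (Finsupp.support_single_subset hb')]
  exact h

theorem SupportRel.mapDomain [AddCommMonoid M] {r : α → β → Prop} {r' : γ → δ → Prop}
    {f : α →₀ M} {g : β →₀ M} (h : SupportRel r f g) {φ : α → γ} {ψ : β → δ}
    (hφψ : ∀ a b, r a b → r' (φ a) (ψ b)) :
    SupportRel r' (f.mapDomain φ) (g.mapDomain ψ) := by
  classical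
  intro c hc d hd
  obtain ⟨a, ha, rfl⟩ := Finset.mem_image.mp (Finsupp.mapDomain_support hc)
  obtain ⟨b, hb, rfl⟩ := Finset.mem_image.mp (Finsupp.mapDomain_support hd)
  exact hφψ a b (h a ha b hb)

theorem SupportRel.sum_smul [Zero R] [AddCommMonoid M] [SMulZeroClass R M]
    {r : γ → δ → Prop} {f : α →₀ R} {g : β →₀ R}
    {F : α → γ →₀ M} {G : β → δ →₀ M}
    (h : SupportRel (fun a b => SupportRel r (F a) (G b)) f g) :
    SupportRel r (f.sum fun a m => m • F a) (g.sum fun b n => n • G b) := by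
  classical
  intro c hc d hd
  obtain ⟨a, ha, hc⟩ := Finset.mem_biUnion.mp (Finsupp.support_sum hc)
  obtain ⟨b, hb, hd⟩ := Finset.mem_biUnion.mp (Finsupp.support_sum hd)
  exact h a ha b hb c (Finsupp.support_smul hc) d (Finsupp.support_smul hd)

end SupportRel

namespace SubStep

variable {t t' h h' : Term} {s s' : Term →₀ ℂ}

theorem not_isValue (hs : SubStep t h s) : ¬ IsValue t := by
  cases hs <;> exact id

theorem deterministic (h₁ : SubStep t h s) (h₂ : SubStep t h' s') : h = h' ∧ s = s' := by
  induction h₁ generalizing h' s' with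
  | app1 _ hs ih =>
    cases h₂ with
    | app1 _ hs' => obtain ⟨rfl, rfl⟩ := ih hs'; exact ⟨rfl, rfl⟩
    | app2 hv => exact (hs.not_isValue hv).elim
    | _ => exact (hs.not_isValue trivial).elim
  | app2 hv hs ih =>
    cases h₂ with
    | app1 _ hs' => exact (hs'.not_isValue hv).elim
    | app2 _ hs' => obtain ⟨rfl, rfl⟩ := ih hs'; exact ⟨rfl, rfl⟩
    | beta hv' => exact (hs.not_isValue hv').elim
    | gate hg => exact (hs.not_isValue hg.isValue).elim
    | _ => exact (hs.not_isValue trivial).elim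
  | beta hv =>
    cases h₂ with
    | app1 _ hs' => exact (hs'.not_isValue trivial).elim
    | app2 _ hs' => exact (hs'.not_isValue hv).elim
    | beta => exact ⟨rfl, rfl⟩
  | bangBeta1 hx =>
    cases h₂ with
    | app1 _ hs' | app2 _ hs' => exact (hs'.not_isValue trivial).elim
    | bangBeta1 => exact ⟨rfl, rfl⟩
    | bangBeta2 hx' => exact (hx' hx).elim
  | bangBeta2 hx =>
    cases h₂ with
    | app1 _ hs' | app2 _ hs' => exact (hs'.not_isValue trivial).elim
    | bangBeta1 hx' => exact (hx hx').elim
    | bangBeta2 => exact ⟨rfl, rfl⟩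
  | gate hg =>
    cases h₂ with
    | app1 _ hs' => exact (hs'.not_isValue trivial).elim
    | app2 _ hs' => exact (hs'.not_isValue hg.isValue).elim
    | gate hg' => exact ⟨rfl, hg.unique hg'⟩

theorem exists_of_congr (hs : SubStep t h s) (hc : Congr t t') :
    ∃ h' s', SubStep t' h' s' ∧ Congr h h' ∧ SupportRel Congr s s' := by
  induction hs generalizing t' with
  | app1 _ _ ih =>
    let .app hc₁ hc₂ := hc
    obtain ⟨_, _, hs', hh, hss⟩ := ih hc₁
    exact ⟨_, _, .app1 _ hs', .app hh (.refl ph), hss.mapDomain fun _ _ hu => .app hu hc₂⟩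
  | app2 hv _ ih =>
    let .app hc₁ hc₂ := hc
    obtain ⟨_, _, hs', hh, hss⟩ := ih hc₂
    exact ⟨_, _, .app2 (hc₁.isValue_iff.mp hv) hs', .app (.refl ph) hh,
      hss.mapDomain fun _ _ hu => .app hc₁ hu⟩
  | @beta x _ _ hv =>
    let .app (.lam _ hE) hv' := hc
    exact ⟨_, _, .beta (hv'.isValue_iff.mp hv),
      .app (.lam x (hE.skel_eq x ▸ .refl _)) (.refl ph), supportRel_single (hE.subst x hv') _ _⟩
  | @bangBeta1 x _ _ hx =>
    let .app (.lamBang _ hE) (.bang ht) := hc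
    exact ⟨_, _, .bangBeta1 (hE.freeVars_eq ▸ hx),
      .app (.lamBang x (hE.skel_eq x ▸ .refl _)) (.refl ph),
      supportRel_single (hE.subst x ht) _ _⟩
  | @bangBeta2 x _ _ hx =>
    let .app (.lamBang _ hE) (.bang ht) := hc
    exact ⟨_, _, .bangBeta2 (hE.freeVars_eq ▸ hx), .app (.refl _) (.bang ht),
      supportRel_single hE _ _⟩
  | gate hg =>
    let .app hc₁ hc₂ := hc
    obtain rfl := hg.eq_of_congr_const hc₁
    obtain ⟨_, hg'⟩ := hg.exists_of_congr hc₂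
    exact ⟨_, _, .gate hg', .refl _, fun u hu u' hu' =>
      ((hg.congr_of_mem_support hu).trans hc₂).trans (hg'.congr_of_mem_support hu').symm⟩

theorem congr (h₁ : SubStep t h s) (hc : Congr t t') (h₂ : SubStep t' h' s') :
    Congr h h' ∧ SupportRel Congr s s' := by
  obtain ⟨_, _, h₃, hh, hss⟩ := h₁.exists_of_congr hc
  obtain ⟨rfl, rfl⟩ := h₃.deterministic h₂
  exact ⟨hh, hss⟩

end SubStep

theorem ConfigCongr.refl (c : Config) : ConfigCongr c c :=
  ⟨List.forall₂_same.mpr fun t _ => .refl t, .refl c.2⟩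

theorem ConfStep.supportRel {c c' : Config} {σ σ' : QState} (h₁ : ConfStep c σ)
    (hc : ConfigCongr c c') (h₂ : ConfStep c' σ') : SupportRel ConfigCongr σ σ' := by
  cases h₁ with
  | sub hs₁ =>
    cases h₂ with
    | sub hs₂ =>
      obtain ⟨hh, hss⟩ := hs₁.congr hc.2 hs₂
      exact hss.mapDomain fun _ _ hu => ⟨List.rel_append hc.1 (.cons hh .nil), hu⟩
    | idStep hstuck =>
      obtain ⟨_, _, hs₂, -⟩ := hs₁.exists_of_congr hc.2
      exact (hstuck _ _ hs₂).elim
  | idStep hstuck =>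
    cases h₂ with
    | sub hs₂ =>
      obtain ⟨_, _, hs₁, -⟩ := hs₂.exists_of_congr hc.2.symm
      exact (hstuck _ _ hs₁).elim
    | idStep => exact supportRel_single ⟨List.rel_append hc.1 (.cons (.refl ph) .nil), hc.2⟩ _ _

theorem SupportRel.stateStep {ψ φ ψ' φ' : QState} (h : SupportRel ConfigCongr ψ φ)
    (hψ : StateStep ψ ψ') (hφ : StateStep φ φ') : SupportRel ConfigCongr ψ' φ' := by
  obtain ⟨F, hF, rfl⟩ := hψ
  obtain ⟨G, hG, rfl⟩ := hφ
  exact SupportRel.sum_smul fun c hc c' hc' => (hF c hc).supportRel (h c hc c' hc') (hG c' hc')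

/-- Any two configurations in the support of a state reachable
from an initial basis configuration |H;t⟩ by steps of the operational model of
λ_q are congruent. -/
theorem congruent_of_reachable (H : List Term) (t : Term) (ψ : QState)
    (hreach : Relation.ReflTransGen StateStep (Finsupp.single (H, t) (1 : ℂ)) ψ) :
    ∀ c ∈ ψ.support, ∀ c' ∈ ψ.support, ConfigCongr c c' := by
  induction hreach with
  | refl => exact supportRel_single (ConfigCongr.refl (H, t)) 1 1
  | tail _ hstep ih => exact SupportRel.stateStep ih hstep hstep

end LambdaQ
end

section
/- Reduction in λ_q preserves well-formedness: if t is a well-formed λ_q term and |H;t⟩ ⟶ Σᵢ cᵢ |Hᵢ′; tᵢ′⟩ is one step of the operational model of λ_q, then every computational register tᵢ′ appearing in the resulting superposition is well-formed. -/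
namespace LambdaQ

open Term

/-- The well-formedness judgment of λ_q: `WF L N t` formalizes Γ ⊢ t where the
context Γ consists of the linear assumptions x for x ∈ L and the nonlinear
assumptions !x for x ∈ N (all variables distinct). -/
inductive WF : Finset ℕ → Finset ℕ → Term → Prop
  | const (c) : WF ∅ ∅ (.const c)
  | id (x) : WF {x} ∅ (.var x)
  | promotion {N t} : WF ∅ N t → WF ∅ N (.bang t)
  | dereliction {L N t x} : x ∉ L → x ∉ N → WF (insert x L) N t → WF L (insert x N) t
  | contraction {L N t x y z} : x ≠ y → x ∉ L → x ∉ N → y ∉ L → y ∉ N → z ∉ L → z ∉ N →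
      WF L (insert x (insert y N)) t →
      WF L (insert z N) (subst (.var z) y (subst (.var z) x t))
  | weakening {L N t x} : x ∉ L → x ∉ N → WF L N t → WF L (insert x N) t
  | lamI {L N t x} : x ∉ L → x ∉ N → WF (insert x L) N t → WF L N (.lam x t)
  | lamBangI {L N t x} : x ∉ L → x ∉ N → WF L (insert x N) t → WF L N (.lamBang x t)
  | appE {L₁ N₁ L₂ N₂ t₁ t₂} : Disjoint (L₁ ∪ N₁) (L₂ ∪ N₂) →
      WF L₁ N₁ t₁ → WF L₂ N₂ t₂ → WF (L₁ ∪ L₂) (N₁ ∪ N₂) (.app t₁ t₂)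

/-- A term is well-formed if Γ ⊢ t is derivable for some context Γ. -/
def WellFormed (t : Term) : Prop := ∃ L N, WF L N t

/- ===== Auxiliary development ===== -/

theorem fresh_not_mem (s : Finset ℕ) : fresh s ∉ s := by
  intro h
  have := Finset.le_sup (f := id) h
  simp only [id] at this
  simp only [fresh] at this
  omega

theorem fv_subset_allVars : ∀ t, freeVars t ⊆ allVars t := by
  intro t
  induction t with
  | var x => simp [freeVars, allVars]
  | lam x b ih =>
    simp only [freeVars, allVars]
    exact (Finset.sdiff_subset).trans (ih.trans (Finset.subset_insert _ _))
  | app a b iha ihb =>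
    simp only [freeVars, allVars]
    exact Finset.union_subset_union iha ihb
  | const c => simp [freeVars, allVars]
  | bang t ih => exact ih
  | lamBang x b ih =>
    simp only [freeVars, allVars]
    exact (Finset.sdiff_subset).trans (ih.trans (Finset.subset_insert _ _))

theorem rename_not_free {y : ℕ} (z : ℕ) : ∀ t, y ∉ freeVars t → rename y z t = t := by
  intro t
  induction t with
  | var x => intro h; simp [freeVars] at h; simp [rename, Ne.symm h]
  | lam x b ih =>
    intro h
    simp only [freeVars, Finset.mem_sdiff, Finset.mem_singleton] at h
    by_cases hx : x = y
    · simp [rename, hx]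
    · have : y ∉ freeVars b := by tauto
      simp [rename, hx, ih this]
  | app a b iha ihb =>
    intro h
    simp only [freeVars, Finset.mem_union] at h
    push_neg at h
    simp [rename, iha h.1, ihb h.2]
  | const c => intro _; simp [rename]
  | bang t ih => intro h; simp only [freeVars] at h; simp [rename, ih h]
  | lamBang x b ih =>
    intro h
    simp only [freeVars, Finset.mem_sdiff, Finset.mem_singleton] at h
    by_cases hx : x = y
    · simp [rename, hx]
    · have : y ∉ freeVars b := by tauto
      simp [rename, hx, ih this]

theorem fv_rename_subset (y z : ℕ) :
    ∀ t, freeVars (rename y z t) ⊆ insert z ((freeVars t).erase y) := by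
  intro t
  induction t with
  | var x =>
    by_cases hx : x = y
    · simp [rename, freeVars, hx]
    · simp only [rename, if_neg hx, freeVars, Finset.subset_iff, Finset.mem_singleton,
        Finset.mem_insert, Finset.mem_erase]
      rintro a rfl
      exact Or.inr ⟨hx, rfl⟩
  | lam x b ih =>
    by_cases hx : x = y
    · simp only [rename, hx, if_pos rfl, ite_true]
      intro a ha
      simp only [freeVars, Finset.mem_sdiff, Finset.mem_singleton] at ha
      simp only [Finset.mem_insert, Finset.mem_erase, freeVars, Finset.mem_sdiff,
        Finset.mem_singleton]
      subst hx; tauto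
    · simp only [rename, if_neg hx]
      intro a ha
      simp only [freeVars, Finset.mem_sdiff, Finset.mem_singleton] at ha
      have := ih ha.1
      simp only [Finset.mem_insert, Finset.mem_erase] at this ⊢
      simp only [freeVars, Finset.mem_sdiff, Finset.mem_singleton]
      tauto
  | app a b iha ihb =>
    simp only [rename, freeVars]
    intro u hu
    simp only [Finset.mem_union] at hu
    rcases hu with hu | hu
    · have := iha hu
      simp only [Finset.mem_insert, Finset.mem_erase, Finset.mem_union] at this ⊢; tauto
    · have := ihb hu
      simp only [Finset.mem_insert, Finset.mem_erase, Finset.mem_union] at this ⊢; tauto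
  | const c => simp [rename, freeVars]
  | bang t ih => simpa [rename, freeVars] using ih
  | lamBang x b ih =>
    by_cases hx : x = y
    · simp only [rename, hx, if_pos rfl, ite_true]
      intro a ha
      simp only [freeVars, Finset.mem_sdiff, Finset.mem_singleton] at ha
      simp only [Finset.mem_insert, Finset.mem_erase, freeVars, Finset.mem_sdiff,
        Finset.mem_singleton]
      subst hx; tauto
    · simp only [rename, if_neg hx]
      intro a ha
      simp only [freeVars, Finset.mem_sdiff, Finset.mem_singleton] at ha
      have := ih ha.1
      simp only [Finset.mem_insert, Finset.mem_erase] at this ⊢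
      simp only [freeVars, Finset.mem_sdiff, Finset.mem_singleton]
      tauto
theorem subst_not_free (v : Term) {x : ℕ} : ∀ t, x ∉ freeVars t → subst v x t = t := by
  intro t
  induction t with
  | var y => intro h; simp [freeVars] at h; simp [subst, Ne.symm h]
  | lam y b ih =>
    intro h
    simp only [freeVars, Finset.mem_sdiff, Finset.mem_singleton] at h
    by_cases hy : y = x
    · simp [subst, hy]
    · have hb : x ∉ freeVars b := by tauto
      rw [subst, if_neg hy, if_neg (by tauto), ih hb]
  | app a b iha ihb =>
    intro h
    simp only [freeVars, Finset.mem_union] at h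
    push_neg at h
    simp [subst, iha h.1, ihb h.2]
  | const c => intro _; simp [subst]
  | bang t ih => intro h; simp only [freeVars] at h; simp [subst, ih h]
  | lamBang y b ih =>
    intro h
    simp only [freeVars, Finset.mem_sdiff, Finset.mem_singleton] at h
    by_cases hy : y = x
    · simp [subst, hy]
    · have hb : x ∉ freeVars b := by tauto
      rw [subst, if_neg hy, if_neg (by tauto), ih hb]

theorem subst_var_self (x : ℕ) : ∀ t, subst (Term.var x) x t = t := by
  intro t
  induction t with
  | var y => by_cases hy : y = x <;> simp [subst, hy]
  | lam y b ih =>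
    by_cases hy : y = x
    · simp [subst, hy]
    · have : ¬ (y ∈ freeVars (Term.var x) ∧ x ∈ freeVars b) := by
        simp [freeVars]; intro h; exact absurd h hy
      rw [subst, if_neg hy, if_neg this, ih]
  | app a b iha ihb => simp [subst, iha, ihb]
  | const c => simp [subst]
  | bang t ih => simp [subst, ih]
  | lamBang y b ih =>
    by_cases hy : y = x
    · simp [subst, hy]
    · have : ¬ (y ∈ freeVars (Term.var x) ∧ x ∈ freeVars b) := by
        simp [freeVars]; intro h; exact absurd h hy
      rw [subst, if_neg hy, if_neg this, ih]

theorem subst_roundtrip {p n : ℕ} (hpn : p ≠ n) :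
    ∀ t, p ∉ allVars t → subst (Term.var n) p (subst (Term.var p) n t) = t := by
  intro t
  induction t with
  | var y =>
    intro hp
    simp only [allVars, Finset.mem_singleton] at hp
    by_cases hy : y = n
    · simp [subst, hy]
    · simp [subst, hy, Ne.symm hp]
  | lam y b ih =>
    intro hp
    simp only [allVars, Finset.mem_insert] at hp
    push_neg at hp
    obtain ⟨hpy, hpb⟩ := hp
    by_cases hy : y = n
    · subst hy
      rw [subst, if_pos rfl, subst, if_neg (Ne.symm hpy),
        if_neg (fun h => hpb (fv_subset_allVars b h.2)),
        subst_not_free]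
      exact fun h => hpb (fv_subset_allVars b h)
    · have hyp : y ≠ p := fun h => hpy h.symm
      have h1 : ¬ (y ∈ freeVars (Term.var p) ∧ n ∈ freeVars b) := by
        simp [freeVars]; intro h; exact absurd h hyp
      rw [subst, if_neg hy, if_neg h1, subst, if_neg hyp]
      have h2 : ¬ (y ∈ freeVars (Term.var n) ∧ p ∈ freeVars (subst (Term.var p) n b)) := by
        simp [freeVars]; intro h; exact absurd h hy
      rw [if_neg h2, ih hpb]
  | app a b iha ihb =>
    intro hp
    simp only [allVars, Finset.mem_union] at hp
    push_neg at hp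
    simp [subst, iha hp.1, ihb hp.2]
  | const c => intro _; simp [subst]
  | bang t ih =>
    intro hp
    simp only [allVars] at hp
    simp [subst, ih hp]
  | lamBang y b ih =>
    intro hp
    simp only [allVars, Finset.mem_insert] at hp
    push_neg at hp
    obtain ⟨hpy, hpb⟩ := hp
    by_cases hy : y = n
    · subst hy
      rw [subst, if_pos rfl, subst, if_neg (Ne.symm hpy),
        if_neg (fun h => hpb (fv_subset_allVars b h.2)),
        subst_not_free]
      exact fun h => hpb (fv_subset_allVars b h)
    · have hyp : y ≠ p := fun h => hpy h.symm
      have h1 : ¬ (y ∈ freeVars (Term.var p) ∧ n ∈ freeVars b) := by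
        simp [freeVars]; intro h; exact absurd h hyp
      rw [subst, if_neg hy, if_neg h1, subst, if_neg hyp]
      have h2 : ¬ (y ∈ freeVars (Term.var n) ∧ p ∈ freeVars (subst (Term.var p) n b)) := by
        simp [freeVars]; intro h; exact absurd h hy
      rw [if_neg h2, ih hpb]
theorem size_pos : ∀ t, 0 < size t := by
  intro t; cases t <;> simp [size]

theorem fv_subst_subset (v : Term) (x : ℕ) :
    ∀ t, freeVars (subst v x t) ⊆ (freeVars t).erase x ∪ freeVars v := by
  suffices h : ∀ n t, size t ≤ n →
      freeVars (subst v x t) ⊆ (freeVars t).erase x ∪ freeVars v by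
    intro t; exact h (size t) t le_rfl
  intro n
  induction n with
  | zero => intro t ht; exact absurd ht (by have := size_pos t; omega)
  | succ n ih =>
    intro t ht
    cases t with
    | var y =>
      by_cases hy : y = x
      · simp [subst, hy]
      · rw [subst, if_neg hy]
        intro a ha
        simp only [freeVars, Finset.mem_singleton] at ha
        subst ha
        exact Finset.mem_union_left _ (Finset.mem_erase.mpr ⟨hy, by simp [freeVars]⟩)
    | const c => simp [subst, freeVars]
    | app a b =>
      simp only [size] at ht
      have ha := ih a (by omega)
      have hb := ih b (by omega)
      simp only [subst, freeVars]
      intro u hu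
      simp only [Finset.mem_union] at hu
      rcases hu with hu | hu
      · have := ha hu
        simp only [Finset.mem_union, Finset.mem_erase] at this ⊢; tauto
      · have := hb hu
        simp only [Finset.mem_union, Finset.mem_erase] at this ⊢; tauto
    | bang t' =>
      simp only [size] at ht
      have := ih t' (by omega)
      simpa [subst, freeVars] using this
    | lam y b =>
      simp only [size] at ht
      by_cases hy : y = x
      · subst hy
        simp only [subst, if_pos rfl, ite_true]
        intro u hu
        simp only [Finset.mem_union, Finset.mem_erase, freeVars, Finset.mem_sdiff,
          Finset.mem_singleton] at hu ⊢
        tauto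
      · by_cases hc : y ∈ freeVars v ∧ x ∈ freeVars b
        · rw [subst, if_neg hy, if_pos hc]
          set z := fresh (allVars b ∪ freeVars v ∪ {x}) with hz
          have h1 := ih (rename y z b) (by rw [size_rename]; omega)
          intro u hu
          simp only [freeVars, Finset.mem_sdiff, Finset.mem_singleton] at hu
          obtain ⟨hu1, hu2⟩ := hu
          have := h1 hu1
          simp only [Finset.mem_union, Finset.mem_erase] at this
          rcases this with ⟨hux, hur⟩ | huv
          · have := fv_rename_subset y z b hur
            simp only [Finset.mem_insert, Finset.mem_erase] at this
            rcases this with rfl | ⟨huy, hub⟩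
            · exact absurd rfl hu2
            · simp only [Finset.mem_union, Finset.mem_erase, freeVars, Finset.mem_sdiff,
                Finset.mem_singleton]
              tauto
          · simp only [Finset.mem_union]; tauto
        · rw [subst, if_neg hy, if_neg hc]
          have h1 := ih b (by omega)
          intro u hu
          simp only [freeVars, Finset.mem_sdiff, Finset.mem_singleton] at hu
          have := h1 hu.1
          simp only [Finset.mem_union, Finset.mem_erase, freeVars, Finset.mem_sdiff,
            Finset.mem_singleton] at this ⊢
          tauto
    | lamBang y b =>
      simp only [size] at ht
      by_cases hy : y = x
      · subst hy
        simp only [subst, if_pos rfl, ite_true]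
        intro u hu
        simp only [Finset.mem_union, Finset.mem_erase, freeVars, Finset.mem_sdiff,
          Finset.mem_singleton] at hu ⊢
        tauto
      · by_cases hc : y ∈ freeVars v ∧ x ∈ freeVars b
        · rw [subst, if_neg hy, if_pos hc]
          set z := fresh (allVars b ∪ freeVars v ∪ {x}) with hz
          have h1 := ih (rename y z b) (by rw [size_rename]; omega)
          intro u hu
          simp only [freeVars, Finset.mem_sdiff, Finset.mem_singleton] at hu
          obtain ⟨hu1, hu2⟩ := hu
          have := h1 hu1
          simp only [Finset.mem_union, Finset.mem_erase] at this
          rcases this with ⟨hux, hur⟩ | huv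
          · have := fv_rename_subset y z b hur
            simp only [Finset.mem_insert, Finset.mem_erase] at this
            rcases this with rfl | ⟨huy, hub⟩
            · exact absurd rfl hu2
            · simp only [Finset.mem_union, Finset.mem_erase, freeVars, Finset.mem_sdiff,
                Finset.mem_singleton]
              tauto
          · simp only [Finset.mem_union]; tauto
        · rw [subst, if_neg hy, if_neg hc]
          have h1 := ih b (by omega)
          intro u hu
          simp only [freeVars, Finset.mem_sdiff, Finset.mem_singleton] at hu
          have := h1 hu.1
          simp only [Finset.mem_union, Finset.mem_erase, freeVars, Finset.mem_sdiff,
            Finset.mem_singleton] at this ⊢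
          tauto
/-- A syntax-directed presentation of well-formedness. -/
inductive WFS : Finset ℕ → Finset ℕ → Term → Prop
  | var_lin {x N} : x ∉ N → WFS {x} N (.var x)
  | var_nl {x N} : x ∈ N → WFS ∅ N (.var x)
  | const {c N} : WFS ∅ N (.const c)
  | bang {N t} : WFS ∅ N t → WFS ∅ N (.bang t)
  | lam {L N x b} : x ∉ L → WFS (insert x L) (N.erase x) b → WFS L N (.lam x b)
  | lamBang {L N x b} : x ∉ L → WFS L (insert x N) b → WFS L N (.lamBang x b)
  | app {L₁ L₂ N a b} : Disjoint L₁ L₂ → WFS L₁ N a → WFS L₂ N b →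
      WFS (L₁ ∪ L₂) N (.app a b)

theorem WFS.disjoint {L N t} (h : WFS L N t) : Disjoint L N := by
  induction h with
  | var_lin hx => simpa using hx
  | var_nl _ => simp
  | const => simp
  | bang _ _ => simp
  | lam hx _ ihb =>
    rw [Finset.disjoint_left]
    intro a haL haN
    rw [Finset.disjoint_left] at ihb
    exact ihb (Finset.mem_insert_of_mem haL)
      (Finset.mem_erase.mpr ⟨fun h => hx (h ▸ haL), haN⟩)
  | lamBang hx _ ihb =>
    rw [Finset.disjoint_left]
    intro a haL haN
    rw [Finset.disjoint_left] at ihb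
    exact ihb haL (Finset.mem_insert_of_mem haN)
  | app _ _ _ iha ihb => exact Finset.disjoint_union_left.mpr ⟨iha, ihb⟩

theorem WFS.lin_subset {L N t} (h : WFS L N t) : L ⊆ freeVars t := by
  induction h with
  | var_lin _ => simp [freeVars]
  | var_nl _ => simp
  | const => simp
  | bang _ _ => simp
  | @lam L N x b hx _ ihb =>
    intro a ha
    simp only [freeVars, Finset.mem_sdiff, Finset.mem_singleton]
    exact ⟨ihb (Finset.mem_insert_of_mem ha), fun h => hx (h ▸ ha)⟩
  | @lamBang L N x b hx _ ihb =>
    intro a ha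
    simp only [freeVars, Finset.mem_sdiff, Finset.mem_singleton]
    exact ⟨ihb ha, fun h => hx (h ▸ ha)⟩
  | app _ _ _ iha ihb =>
    simp only [freeVars]
    exact Finset.union_subset_union iha ihb

theorem WFS.fv_subset {L N t} (h : WFS L N t) : freeVars t ⊆ L ∪ N := by
  induction h with
  | @var_lin x N _ => simp [freeVars]
  | @var_nl x N hx =>
    intro a ha
    simp only [freeVars, Finset.mem_singleton] at ha
    subst ha
    exact Finset.mem_union_right _ hx
  | const => simp [freeVars]
  | bang _ ih => simpa [freeVars] using ih
  | @lam L N x b hx _ ihb =>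
    intro a ha
    simp only [freeVars, Finset.mem_sdiff, Finset.mem_singleton] at ha
    have := ihb ha.1
    simp only [Finset.mem_union, Finset.mem_insert, Finset.mem_erase] at this ⊢
    tauto
  | @lamBang L N x b hx _ ihb =>
    intro a ha
    simp only [freeVars, Finset.mem_sdiff, Finset.mem_singleton] at ha
    have := ihb ha.1
    simp only [Finset.mem_union, Finset.mem_insert] at this ⊢
    tauto
  | app _ _ _ iha ihb =>
    simp only [freeVars]
    intro a ha
    simp only [Finset.mem_union] at ha ⊢
    rcases ha with ha | ha
    · have := iha ha; simp only [Finset.mem_union] at this; tauto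
    · have := ihb ha; simp only [Finset.mem_union] at this; tauto

theorem WFS.weaken : ∀ t {L N N'}, WFS L N t → N ⊆ N' → Disjoint L N' → WFS L N' t := by
  intro t
  induction t with
  | var y =>
    intro L N N' h hsub hdis
    cases h with
    | var_lin hx =>
      exact WFS.var_lin (Finset.disjoint_left.mp hdis (Finset.mem_singleton_self y))
    | var_nl hx => exact WFS.var_nl (hsub hx)
  | const c => intro L N N' h _ _; cases h; exact WFS.const
  | bang t' ih =>
    intro L N N' h hsub hdis
    cases h with
    | bang h' => exact WFS.bang (ih h' hsub (by simp))
  | app a b iha ihb =>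
    intro L N N' h hsub hdis
    cases h with
    | app hd ha hb =>
      exact WFS.app hd (iha ha hsub (hdis.mono_left Finset.subset_union_left))
        (ihb hb hsub (hdis.mono_left Finset.subset_union_right))
  | lam y b ihb =>
    intro L N N' h hsub hdis
    cases h with
    | lam hx hb =>
      refine WFS.lam hx (ihb hb (Finset.erase_subset_erase _ hsub) ?_)
      rw [Finset.disjoint_left]
      intro a ha haN
      simp only [Finset.mem_insert] at ha
      simp only [Finset.mem_erase] at haN
      rcases ha with rfl | ha
      · exact haN.1 rfl
      · exact Finset.disjoint_left.mp hdis ha haN.2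
  | lamBang y b ihb =>
    intro L N N' h hsub hdis
    cases h with
    | lamBang hx hb =>
      refine WFS.lamBang hx (ihb hb (Finset.insert_subset_insert _ hsub) ?_)
      rw [Finset.disjoint_left]
      intro a ha haN
      simp only [Finset.mem_insert] at haN
      rcases haN with rfl | haN
      · exact hx ha
      · exact Finset.disjoint_left.mp hdis ha haN

theorem WFS.strengthen : ∀ t {L N} (y : ℕ), WFS L N t → y ∉ freeVars t →
    WFS L (N.erase y) t := by
  intro t
  induction t with
  | var z =>
    intro L N y h hy
    simp only [freeVars, Finset.mem_singleton] at hy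
    cases h with
    | var_lin hx => exact WFS.var_lin (fun hc => hx (Finset.mem_of_mem_erase hc))
    | var_nl hx => exact WFS.var_nl (Finset.mem_erase.mpr ⟨fun h => hy h.symm, hx⟩)
  | const c => intro L N y h _; cases h; exact WFS.const
  | bang t' ih =>
    intro L N y h hy
    cases h with
    | bang h' => exact WFS.bang (ih y h' hy)
  | app a b iha ihb =>
    intro L N y h hy
    simp only [freeVars, Finset.mem_union] at hy
    push_neg at hy
    cases h with
    | app hd ha hb => exact WFS.app hd (iha y ha hy.1) (ihb y hb hy.2)
  | lam z b ihb =>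
    intro L N y h hy
    simp only [freeVars, Finset.mem_sdiff, Finset.mem_singleton] at hy
    cases h with
    | lam hx hb =>
      by_cases hyz : y = z
      · subst hyz
        exact WFS.lam hx (by rwa [Finset.erase_idem])
      · have : y ∉ freeVars b := by tauto
        refine WFS.lam hx ?_
        rw [Finset.erase_right_comm]
        exact ihb y hb this
  | lamBang z b ihb =>
    intro L N y h hy
    simp only [freeVars, Finset.mem_sdiff, Finset.mem_singleton] at hy
    cases h with
    | lamBang hx hb =>
      by_cases hyz : y = z
      · subst hyz
        refine WFS.lamBang hx ?_
        have he : insert y (N.erase y) = insert y N := by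
          ext a; simp only [Finset.mem_insert, Finset.mem_erase]; tauto
        rwa [he]
      · have hyb : y ∉ freeVars b := by tauto
        refine WFS.lamBang hx ?_
        rw [← Finset.erase_insert_of_ne (fun h => hyz h.symm)]
        exact ihb y hb hyb
theorem insert_erase_eq (a : ℕ) (s : Finset ℕ) : insert a (s.erase a) = insert a s := by
  ext b; simp only [Finset.mem_insert, Finset.mem_erase]; tauto

theorem WFS.rename_lin : ∀ t {L N} {y z : ℕ}, WFS L N t → y ∈ L → z ∉ allVars t →
    z ∉ L → z ∉ N → WFS (insert z (L.erase y)) N (rename y z t) := by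
  intro t
  induction t with
  | var x =>
    intro L N y z h hy hzt hzL hzN
    cases h with
    | var_lin hx =>
      rw [Finset.mem_singleton] at hy
      subst hy
      rw [rename, if_pos rfl, Finset.erase_singleton]
      exact WFS.var_lin hzN
    | var_nl hx => exact absurd hy (Finset.notMem_empty _)
  | const c => intro L N y z h hy _ _ _; cases h; exact absurd hy (Finset.notMem_empty _)
  | bang t' _ => intro L N y z h hy _ _ _; cases h; exact absurd hy (Finset.notMem_empty _)
  | app a b iha ihb =>
    intro L N y z h hy hzt hzL hzN
    simp only [allVars, Finset.mem_union] at hzt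
    push_neg at hzt
    cases h with
    | @app La Lb N a b hd ha hb =>
      simp only [Finset.mem_union] at hy hzL
      push_neg at hzL
      rcases hy with hy | hy
      · have hynb : y ∉ freeVars b := fun hc => by
          rcases Finset.mem_union.mp (hb.fv_subset hc) with h' | h'
          · exact Finset.disjoint_left.mp hd hy h'
          · exact Finset.disjoint_left.mp ha.disjoint hy h'
        rw [rename, rename_not_free z b hynb]
        have h1 := iha ha hy hzt.1 hzL.1 hzN
        have h2 : Disjoint (insert z (La.erase y)) Lb := by
          rw [Finset.disjoint_left]
          intro u hu
          simp only [Finset.mem_insert, Finset.mem_erase] at hu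
          rcases hu with rfl | hu
          · exact hzL.2
          · exact Finset.disjoint_left.mp hd hu.2
        have hyLb : y ∉ Lb := fun hc => hynb (hb.lin_subset hc)
        have h3 : insert z (La.erase y) ∪ Lb = insert z ((La ∪ Lb).erase y) := by
          ext u
          simp only [Finset.mem_insert, Finset.mem_erase, Finset.mem_union]
          by_cases huy : u = y <;> simp [huy, hyLb] <;> tauto
        rw [← h3]
        exact WFS.app h2 h1 hb
      · have hyna : y ∉ freeVars a := fun hc => by
          rcases Finset.mem_union.mp (ha.fv_subset hc) with h' | h'
          · exact Finset.disjoint_left.mp hd h' hy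
          · exact Finset.disjoint_left.mp hb.disjoint hy h'
        rw [rename, rename_not_free z a hyna]
        have h1 := ihb hb hy hzt.2 hzL.2 hzN
        have h2 : Disjoint La (insert z (Lb.erase y)) := by
          rw [Finset.disjoint_right]
          intro u hu
          simp only [Finset.mem_insert, Finset.mem_erase] at hu
          rcases hu with rfl | hu
          · exact hzL.1
          · exact fun hc => Finset.disjoint_left.mp hd hc hu.2
        have hyLa : y ∉ La := fun hc => hyna (ha.lin_subset hc)
        have h3 : La ∪ insert z (Lb.erase y) = insert z ((La ∪ Lb).erase y) := by
          ext u
          simp only [Finset.mem_insert, Finset.mem_erase, Finset.mem_union]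
          by_cases huy : u = y <;> simp [huy, hyLa] <;> tauto
        rw [← h3]
        exact WFS.app h2 ha h1
  | lam w b ihb =>
    intro L N y z h hy hzt hzL hzN
    simp only [allVars, Finset.mem_insert] at hzt
    push_neg at hzt
    cases h with
    | lam hx hb =>
      have hwy : w ≠ y := fun h => hx (h ▸ hy)
      rw [rename, if_neg hwy]
      have h1 := ihb hb (Finset.mem_insert_of_mem hy) hzt.2
        (by simp only [Finset.mem_insert]; push_neg; exact ⟨hzt.1, hzL⟩)
        (fun hc => hzN (Finset.mem_of_mem_erase hc))
      rw [Finset.erase_insert_of_ne hwy, Finset.insert_comm] at h1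
      refine WFS.lam ?_ h1
      simp only [Finset.mem_insert, Finset.mem_erase]
      push_neg
      exact ⟨fun h => hzt.1 h.symm, fun _ => hx⟩
  | lamBang w b ihb =>
    intro L N y z h hy hzt hzL hzN
    simp only [allVars, Finset.mem_insert] at hzt
    push_neg at hzt
    cases h with
    | lamBang hx hb =>
      have hwy : w ≠ y := fun h => hx (h ▸ hy)
      rw [rename, if_neg hwy]
      have h1 := ihb hb hy hzt.2 hzL
        (by simp only [Finset.mem_insert]; push_neg; exact ⟨hzt.1, hzN⟩)
      refine WFS.lamBang ?_ h1
      simp only [Finset.mem_insert, Finset.mem_erase]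
      push_neg
      exact ⟨fun h => hzt.1 h.symm, fun _ => hx⟩
theorem WFS.rename_nl : ∀ t {L N} {y z : ℕ}, WFS L N t → y ∈ N → z ∉ allVars t →
    z ∉ L → z ∉ N → WFS L (insert z (N.erase y)) (rename y z t) := by
  intro t
  induction t with
  | var x =>
    intro L N y z h hy hzt hzL hzN
    cases h with
    | var_lin hx =>
      have hxy : x ≠ y := fun h => hx (h ▸ hy)
      rw [rename, if_neg hxy]
      refine WFS.var_lin ?_
      simp only [Finset.mem_insert, Finset.mem_erase]
      push_neg
      refine ⟨fun h => hzL (h ▸ Finset.mem_singleton_self x), fun _ => hx⟩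
    | var_nl hx =>
      by_cases hxy : x = y
      · rw [rename, if_pos hxy]
        exact WFS.var_nl (Finset.mem_insert_self _ _)
      · rw [rename, if_neg hxy]
        exact WFS.var_nl (Finset.mem_insert_of_mem (Finset.mem_erase.mpr ⟨hxy, hx⟩))
  | const c => intro L N y z h _ _ _ _; cases h; rw [rename]; exact WFS.const
  | bang t' ih =>
    intro L N y z h hy hzt hzL hzN
    cases h with
    | bang h' => exact WFS.bang (ih h' hy hzt (Finset.notMem_empty z) hzN)
  | app a b iha ihb =>
    intro L N y z h hy hzt hzL hzN
    simp only [allVars, Finset.mem_union] at hzt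
    push_neg at hzt
    cases h with
    | @app La Lb N a b hd ha hb =>
      simp only [Finset.mem_union] at hzL
      push_neg at hzL
      rw [rename]
      exact WFS.app hd (iha ha hy hzt.1 hzL.1 hzN) (ihb hb hy hzt.2 hzL.2 hzN)
  | lam w b ihb =>
    intro L N y z h hy hzt hzL hzN
    simp only [allVars, Finset.mem_insert] at hzt
    push_neg at hzt
    have hzy : z ≠ y := fun h => hzN (h ▸ hy)
    cases h with
    | lam hx hb =>
      by_cases hwy : w = y
      · subst hwy
        rw [rename, if_pos rfl]
        refine WFS.lam hx ?_
        have he : (insert z (N.erase w)).erase w = insert z (N.erase w) := by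
          ext u
          simp only [Finset.mem_insert, Finset.mem_erase]
          constructor
          · tauto
          · rintro (rfl | hu)
            · exact ⟨fun h => hzt.1 h, Or.inl rfl⟩
            · exact ⟨hu.1, Or.inr hu⟩
        rw [he]
        refine hb.weaken _ (Finset.subset_insert _ _) ?_
        rw [Finset.disjoint_left]
        intro u hu huc
        simp only [Finset.mem_insert, Finset.mem_erase] at huc
        rcases huc with rfl | huc
        · simp only [Finset.mem_insert] at hu
          rcases hu with rfl | hu
          · exact hzt.1 rfl
          · exact hzL hu
        · exact Finset.disjoint_left.mp hb.disjoint hu (Finset.mem_erase.mpr huc)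
      · rw [rename, if_neg hwy]
        have h1 := ihb hb (Finset.mem_erase.mpr ⟨fun h => hwy h.symm, hy⟩) hzt.2 ?_ ?_
        · refine WFS.lam hx ?_
          have he : (insert z (N.erase y)).erase w = insert z ((N.erase w).erase y) := by
            ext u
            simp only [Finset.mem_insert, Finset.mem_erase]
            constructor
            · rintro ⟨huw, rfl | hu⟩
              · exact Or.inl rfl
              · exact Or.inr ⟨hu.1, huw, hu.2⟩
            · rintro (rfl | ⟨hu1, hu2, hu3⟩)
              · exact ⟨fun h => hzt.1 h, Or.inl rfl⟩
              · exact ⟨hu2, Or.inr ⟨hu1, hu3⟩⟩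
          rw [he]
          exact h1
        · simp only [Finset.mem_insert]
          push_neg
          exact ⟨fun h => hzt.1 h, hzL⟩
        · exact fun hc => hzN (Finset.mem_of_mem_erase hc)
  | lamBang w b ihb =>
    intro L N y z h hy hzt hzL hzN
    simp only [allVars, Finset.mem_insert] at hzt
    push_neg at hzt
    have hzy : z ≠ y := fun h => hzN (h ▸ hy)
    cases h with
    | lamBang hx hb =>
      by_cases hwy : w = y
      · subst hwy
        rw [rename, if_pos rfl]
        refine WFS.lamBang hx ?_
        have he : insert w (insert z (N.erase w)) = insert z (insert w N) := by
          ext u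
          simp only [Finset.mem_insert, Finset.mem_erase]
          by_cases huw : u = w <;> simp [huw] <;> tauto
        rw [he]
        refine hb.weaken _ (Finset.subset_insert _ _) ?_
        rw [Finset.disjoint_left]
        intro u hu huc
        simp only [Finset.mem_insert] at huc
        rcases huc with rfl | huc
        · exact hzL hu
        · exact Finset.disjoint_left.mp hb.disjoint hu (Finset.mem_insert.mpr huc)
      · rw [rename, if_neg hwy]
        have h1 := ihb hb (Finset.mem_insert_of_mem hy) hzt.2 hzL ?_
        · refine WFS.lamBang hx ?_
          have he : insert w (insert z (N.erase y)) = insert z ((insert w N).erase y) := by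
            ext u
            simp only [Finset.mem_insert, Finset.mem_erase]
            by_cases huy : u = y
            · subst huy
              simp [hwy, Ne.symm hzy]
              tauto
            · simp [huy]
              tauto
          rw [he]
          exact h1
        · simp only [Finset.mem_insert]
          push_neg
          exact ⟨fun h => hzt.1 h, hzN⟩
theorem WFS.demote : ∀ t {L N} {x : ℕ}, WFS L N t → x ∈ L →
    WFS (L.erase x) (insert x N) t := by
  intro t
  induction t with
  | var y =>
    intro L N x h hx
    cases h with
    | var_lin hy =>
      rw [Finset.mem_singleton] at hx
      subst hx
      rw [Finset.erase_singleton]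
      exact WFS.var_nl (Finset.mem_insert_self _ _)
    | var_nl _ => exact absurd hx (Finset.notMem_empty _)
  | const c => intro L N x h hx; cases h; exact absurd hx (Finset.notMem_empty _)
  | bang t' _ => intro L N x h hx; cases h; exact absurd hx (Finset.notMem_empty _)
  | app a b iha ihb =>
    intro L N x h hx
    cases h with
    | @app La Lb N a b hd ha hb =>
      rcases Finset.mem_union.mp hx with hx | hx
      · have hxb : x ∉ Lb := fun hc => Finset.disjoint_left.mp hd hx hc
        have h1 := iha ha hx
        have h2 := hb.weaken b (Finset.subset_insert x N) ?_
        · have he : (La ∪ Lb).erase x = La.erase x ∪ Lb := by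
            ext u
            simp only [Finset.mem_union, Finset.mem_erase]
            by_cases hux : u = x <;> simp [hux, hxb] <;> tauto
          rw [he]
          refine WFS.app ?_ h1 h2
          exact (hd.mono_left (Finset.erase_subset _ _))
        · rw [Finset.disjoint_left]
          intro u hu huc
          rcases Finset.mem_insert.mp huc with rfl | huc
          · exact hxb hu
          · exact Finset.disjoint_left.mp hb.disjoint hu huc
      · have hxa : x ∉ La := fun hc => Finset.disjoint_left.mp hd hc hx
        have h1 := ihb hb hx
        have h2 := ha.weaken a (Finset.subset_insert x N) ?_
        · have he : (La ∪ Lb).erase x = La ∪ Lb.erase x := by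
            ext u
            simp only [Finset.mem_union, Finset.mem_erase]
            by_cases hux : u = x <;> simp [hux, hxa] <;> tauto
          rw [he]
          refine WFS.app ?_ h2 h1
          exact (hd.mono_right (Finset.erase_subset _ _))
        · rw [Finset.disjoint_left]
          intro u hu huc
          rcases Finset.mem_insert.mp huc with rfl | huc
          · exact hxa hu
          · exact Finset.disjoint_left.mp ha.disjoint hu huc
  | lam w b ihb =>
    intro L N x h hx
    cases h with
    | lam hw hb =>
      have hwx : w ≠ x := fun h => hw (h ▸ hx)
      have h1 := ihb hb (Finset.mem_insert_of_mem hx)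
      rw [Finset.erase_insert_of_ne hwx] at h1
      refine WFS.lam ?_ ?_
      · exact fun hc => hw (Finset.mem_of_mem_erase hc)
      · have he : (insert x N).erase w = insert x (N.erase w) := by
          rw [Finset.erase_insert_of_ne (Ne.symm hwx)]
        rw [he]
        exact h1
  | lamBang w b ihb =>
    intro L N x h hx
    cases h with
    | lamBang hw hb =>
      have hwx : w ≠ x := fun h => hw (h ▸ hx)
      have h1 := ihb hb hx
      rw [Finset.insert_comm] at h1
      refine WFS.lamBang (fun hc => hw (Finset.mem_of_mem_erase hc)) h1
theorem fresh_facts (b v : Term) (x : ℕ) :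
    fresh (allVars b ∪ freeVars v ∪ {x}) ∉ allVars b ∧
    fresh (allVars b ∪ freeVars v ∪ {x}) ∉ freeVars v ∧
    fresh (allVars b ∪ freeVars v ∪ {x}) ≠ x := by
  have h := fresh_not_mem (allVars b ∪ freeVars v ∪ {x})
  simp only [Finset.mem_union, Finset.mem_singleton] at h
  push_neg at h
  exact ⟨h.1.1, h.1.2, h.2⟩

theorem WFS.sub_nl : ∀ (n : ℕ) (t : Term) {L N M : Finset ℕ} {v : Term} {x : ℕ},
    size t ≤ n → WFS L N t → x ∈ N → WFS ∅ M v → N.erase x ⊆ M → Disjoint L M →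
    WFS L M (subst v x t) := by
  intro n
  induction n with
  | zero => intro t _ _ _ _ _ ht; exact absurd ht (by have := size_pos t; omega)
  | succ n ih =>
    intro t L N M v x ht h hx hv hNM hLM
    have hNM' : ∀ u, u ≠ x → u ∈ N → u ∈ M :=
      fun u h1 h2 => hNM (Finset.mem_erase.mpr ⟨h1, h2⟩)
    by_cases hxf : x ∈ freeVars t
    case neg =>
      rw [subst_not_free v t hxf]
      exact (h.strengthen t x hxf).weaken t hNM hLM
    case pos =>
    cases t with
    | var y =>
      simp only [freeVars, Finset.mem_singleton] at hxf
      subst hxf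
      cases h with
      | var_lin hy => exact absurd hx hy
      | var_nl hy => simp only [subst, if_pos rfl]; exact hv
    | const c => simp [freeVars] at hxf
    | bang t' =>
      simp only [size] at ht
      cases h with
      | bang h' =>
        simp only [subst]
        exact WFS.bang (ih t' (by omega) h' hx hv hNM (by simp))
    | app a b =>
      simp only [size] at ht
      cases h with
      | @app La Lb N a b hd ha hb =>
        simp only [subst]
        exact WFS.app hd
          (ih a (by omega) ha hx hv hNM (hLM.mono_left Finset.subset_union_left))
          (ih b (by omega) hb hx hv hNM (hLM.mono_left Finset.subset_union_right))
    | lam w b =>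
      simp only [size] at ht
      simp only [freeVars, Finset.mem_sdiff, Finset.mem_singleton] at hxf
      obtain ⟨hxb, hxw⟩ := hxf
      cases h with
      | lam hw hb =>
        have hwx : w ≠ x := fun h => hxw h.symm
        by_cases hc : w ∈ freeVars v ∧ x ∈ freeVars b
        · -- renaming branch
          rw [subst, if_neg hwx, if_pos hc]
          set z := fresh (allVars b ∪ freeVars v ∪ {x}) with hzdef
          obtain ⟨hzb, hzv, hzx⟩ := fresh_facts b v x
          rw [← hzdef] at hzb hzv hzx
          have hzw : z ≠ w := fun h => hzv (h ▸ hc.1)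
          have hzL : z ∉ L := fun hc' => hzb (fv_subset_allVars b
            (Finset.mem_sdiff.mp ((WFS.lam hw hb).lin_subset hc')).1)
          have hzfb : z ∉ freeVars b := fun h => hzb (fv_subset_allVars b h)
          have hb1 := hb.strengthen b z hzfb
          have h2 := WFS.rename_lin b hb1 (Finset.mem_insert_self w L) hzb
            (by simp only [Finset.mem_insert]; push_neg; exact ⟨hzw, hzL⟩)
            (fun hc' => (Finset.mem_erase.mp hc').1 rfl)
          rw [Finset.erase_insert hw] at h2
          have h3 := ih (rename w z b) (by rw [size_rename]; omega) h2
            (show x ∈ (N.erase w).erase z by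
              exact Finset.mem_erase.mpr ⟨fun h => hzx h.symm,
                Finset.mem_erase.mpr ⟨Ne.symm hwx, hx⟩⟩)
            (hv.strengthen v z hzv)
            (by
              intro u hu
              simp only [Finset.mem_erase] at hu ⊢
              exact ⟨hu.2.1, hNM' u hu.1 hu.2.2.2⟩)
            (by
              rw [Finset.disjoint_left]
              intro u hu huc
              simp only [Finset.mem_insert] at hu
              simp only [Finset.mem_erase] at huc
              rcases hu with rfl | hu
              · exact huc.1 rfl
              · exact Finset.disjoint_left.mp hLM hu huc.2)
          exact WFS.lam hzL h3
        · -- no renaming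
          rw [subst, if_neg hwx, if_neg hc]
          have hwv : w ∉ freeVars v := fun h => hc ⟨h, hxb⟩
          have h3 := ih b (by omega) hb
            (Finset.mem_erase.mpr ⟨Ne.symm hwx, hx⟩)
            (hv.strengthen v w hwv)
            (by
              intro u hu
              simp only [Finset.mem_erase] at hu ⊢
              exact ⟨hu.2.1, hNM' u hu.1 hu.2.2⟩)
            (by
              rw [Finset.disjoint_left]
              intro u hu huc
              simp only [Finset.mem_insert] at hu
              simp only [Finset.mem_erase] at huc
              rcases hu with rfl | hu
              · exact huc.1 rfl
              · exact Finset.disjoint_left.mp hLM hu huc.2)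
          exact WFS.lam hw h3
    | lamBang w b =>
      simp only [size] at ht
      simp only [freeVars, Finset.mem_sdiff, Finset.mem_singleton] at hxf
      obtain ⟨hxb, hxw⟩ := hxf
      cases h with
      | lamBang hw hb =>
        have hwx : w ≠ x := fun h => hxw h.symm
        by_cases hc : w ∈ freeVars v ∧ x ∈ freeVars b
        · rw [subst, if_neg hwx, if_pos hc]
          set z := fresh (allVars b ∪ freeVars v ∪ {x}) with hzdef
          obtain ⟨hzb, hzv, hzx⟩ := fresh_facts b v x
          rw [← hzdef] at hzb hzv hzx
          have hzw : z ≠ w := fun h => hzv (h ▸ hc.1)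
          have hzfb : z ∉ freeVars b := fun h => hzb (fv_subset_allVars b h)
          have hzL : z ∉ L := fun hc' => hzb (fv_subset_allVars b
            (Finset.mem_sdiff.mp ((WFS.lamBang hw hb).lin_subset hc')).1)
          have hb1 := hb.strengthen b z hzfb
          rw [Finset.erase_insert_of_ne (fun h : w = z => hzw h.symm)] at hb1
          have h2 := WFS.rename_nl b hb1 (Finset.mem_insert_self w (N.erase z)) hzb hzL
            (by simp only [Finset.mem_insert, Finset.mem_erase]
                push_neg
                exact ⟨hzw, fun h _ => h rfl⟩)
          rw [Finset.erase_insert_eq_erase] at h2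
          have h3 := ih (rename w z b) (by rw [size_rename]; omega) h2
            (show x ∈ insert z ((N.erase z).erase w) by
              simp only [Finset.mem_insert, Finset.mem_erase]
              exact Or.inr ⟨Ne.symm hwx, fun h => hzx h.symm, hx⟩)
            (hv.weaken v (Finset.subset_insert z M) (by simp))
            (by
              intro u hu
              simp only [Finset.mem_insert, Finset.mem_erase] at hu ⊢
              obtain ⟨hux, hu⟩ := hu
              rcases hu with rfl | hu
              · exact Or.inl rfl
              · exact Or.inr (hNM' u hux hu.2.2))
            (by
              rw [Finset.disjoint_left]
              intro u hu huc
              simp only [Finset.mem_insert] at huc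
              rcases huc with rfl | huc
              · exact hzL hu
              · exact Finset.disjoint_left.mp hLM hu huc)
          exact WFS.lamBang hzL h3
        · rw [subst, if_neg hwx, if_neg hc]
          have h3 := ih b (by omega) hb (Finset.mem_insert_of_mem hx)
            (hv.weaken v (Finset.subset_insert w M) (by simp))
            (by
              intro u hu
              simp only [Finset.mem_insert, Finset.mem_erase] at hu ⊢
              obtain ⟨hux, hu⟩ := hu
              rcases hu with rfl | hu
              · exact Or.inl rfl
              · exact Or.inr (hNM' u hux hu))
            (by
              rw [Finset.disjoint_left]
              intro u hu huc
              simp only [Finset.mem_insert] at huc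
              rcases huc with rfl | huc
              · exact hw hu
              · exact Finset.disjoint_left.mp hLM hu huc)
          exact WFS.lamBang hw h3
theorem WFS.sub_lin : ∀ (n : ℕ) (t : Term) {L N M L₂ : Finset ℕ} {v : Term} {x : ℕ},
    size t ≤ n → WFS L N t → x ∈ L → WFS L₂ M v → N ⊆ M →
    Disjoint (L.erase x) M → Disjoint L₂ (L.erase x) →
    WFS ((L.erase x) ∪ L₂) M (subst v x t) := by
  intro n
  induction n with
  | zero => intro t _ _ _ _ _ _ ht; exact absurd ht (by have := size_pos t; omega)
  | succ n ih =>
    intro t L N M L₂ v x ht h hx hv hNM hLM hL2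
    cases t with
    | var y =>
      cases h with
      | var_lin hy =>
        rw [Finset.mem_singleton] at hx
        subst hx
        rw [subst, if_pos rfl, Finset.erase_singleton, Finset.empty_union]
        exact hv
      | var_nl _ => exact absurd hx (Finset.notMem_empty _)
    | const c => cases h; exact absurd hx (Finset.notMem_empty _)
    | bang t' => cases h; exact absurd hx (Finset.notMem_empty _)
    | app a b =>
      simp only [size] at ht
      cases h with
      | @app La Lb N a b hd ha hb =>
        rcases Finset.mem_union.mp hx with hxa | hxb
        · have hxLb : x ∉ Lb := fun hc => Finset.disjoint_left.mp hd hxa hc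
          have hxN : x ∉ N := Finset.disjoint_left.mp ha.disjoint hxa
          have hxfb : x ∉ freeVars b := fun hc => by
            rcases Finset.mem_union.mp (hb.fv_subset hc) with h' | h'
            · exact hxLb h'
            · exact hxN h'
          have hLbE : Lb ⊆ (La ∪ Lb).erase x := fun u hu =>
            Finset.mem_erase.mpr ⟨fun h => hxLb (h ▸ hu), Finset.mem_union_right _ hu⟩
          have h1 := ih a (by omega) ha hxa hv hNM
            (hLM.mono_left (fun u hu => Finset.mem_erase.mpr
              ⟨(Finset.mem_erase.mp hu).1,
               Finset.mem_union_left _ (Finset.mem_erase.mp hu).2⟩))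
            (hL2.mono_right (fun u hu => Finset.mem_erase.mpr
              ⟨(Finset.mem_erase.mp hu).1,
               Finset.mem_union_left _ (Finset.mem_erase.mp hu).2⟩))
          have hdLbM : Disjoint Lb M := by
            rw [Finset.disjoint_left]
            intro u hu
            exact Finset.disjoint_left.mp hLM (hLbE hu)
          have h2 := hb.weaken b hNM hdLbM
          rw [subst, subst_not_free v b hxfb]
          have he : (La ∪ Lb).erase x ∪ L₂ = (La.erase x ∪ L₂) ∪ Lb := by
            ext u
            simp only [Finset.mem_union, Finset.mem_erase]
            by_cases hux : u = x <;> simp [hux, hxLb] <;> tauto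
          rw [he]
          refine WFS.app ?_ h1 h2
          rw [Finset.disjoint_left]
          intro u hu huc
          rcases Finset.mem_union.mp hu with hu | hu
          · exact Finset.disjoint_left.mp hd (Finset.mem_of_mem_erase hu) huc
          · exact Finset.disjoint_left.mp hL2 hu (hLbE huc)
        · have hxLa : x ∉ La := fun hc => Finset.disjoint_left.mp hd hc hxb
          have hxN : x ∉ N := Finset.disjoint_left.mp hb.disjoint hxb
          have hxfa : x ∉ freeVars a := fun hc => by
            rcases Finset.mem_union.mp (ha.fv_subset hc) with h' | h'
            · exact hxLa h'
            · exact hxN h'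
          have hLaE : La ⊆ (La ∪ Lb).erase x := fun u hu =>
            Finset.mem_erase.mpr ⟨fun h => hxLa (h ▸ hu), Finset.mem_union_left _ hu⟩
          have h1 := ih b (by omega) hb hxb hv hNM
            (hLM.mono_left (fun u hu => Finset.mem_erase.mpr
              ⟨(Finset.mem_erase.mp hu).1,
               Finset.mem_union_right _ (Finset.mem_erase.mp hu).2⟩))
            (hL2.mono_right (fun u hu => Finset.mem_erase.mpr
              ⟨(Finset.mem_erase.mp hu).1,
               Finset.mem_union_right _ (Finset.mem_erase.mp hu).2⟩))
          have hdLaM : Disjoint La M := by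
            rw [Finset.disjoint_left]
            intro u hu
            exact Finset.disjoint_left.mp hLM (hLaE hu)
          have h2 := ha.weaken a hNM hdLaM
          rw [subst, subst_not_free v a hxfa]
          have he : (La ∪ Lb).erase x ∪ L₂ = La ∪ (Lb.erase x ∪ L₂) := by
            ext u
            simp only [Finset.mem_union, Finset.mem_erase]
            by_cases hux : u = x <;> simp [hux, hxLa] <;> tauto
          rw [he]
          refine WFS.app ?_ h2 h1
          rw [Finset.disjoint_right]
          intro u hu huc
          rcases Finset.mem_union.mp hu with hu | hu
          · exact Finset.disjoint_left.mp hd huc (Finset.mem_of_mem_erase hu)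
          · exact Finset.disjoint_left.mp hL2 hu (hLaE huc)
    | lam w b =>
      simp only [size] at ht
      cases h with
      | lam hw hb =>
        have hwx : w ≠ x := fun h => hw (h ▸ hx)
        have hxb : x ∈ freeVars b :=
          (Finset.mem_sdiff.mp ((WFS.lam hw hb).lin_subset hx)).1
        by_cases hc : w ∈ freeVars v ∧ x ∈ freeVars b
        · rw [subst, if_neg hwx, if_pos hc]
          set z := fresh (allVars b ∪ freeVars v ∪ {x}) with hzdef
          obtain ⟨hzb, hzv, hzx⟩ := fresh_facts b v x
          rw [← hzdef] at hzb hzv hzx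
          have hzw : z ≠ w := fun h => hzv (h ▸ hc.1)
          have hzfb : z ∉ freeVars b := fun h => hzb (fv_subset_allVars b h)
          have hzL : z ∉ L := fun hc' => hzfb
            (Finset.mem_sdiff.mp ((WFS.lam hw hb).lin_subset hc')).1
          have hzL2 : z ∉ L₂ := fun hc' => hzv (hv.lin_subset hc')
          have hb1 := hb.strengthen b z hzfb
          have h2 := WFS.rename_lin b hb1 (Finset.mem_insert_self w L) hzb
            (by simp only [Finset.mem_insert]; push_neg; exact ⟨hzw, hzL⟩)
            (fun hc' => (Finset.mem_erase.mp hc').1 rfl)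
          rw [Finset.erase_insert hw] at h2
          have h3 := ih (rename w z b) (by rw [size_rename]; omega) h2
            (Finset.mem_insert_of_mem hx)
            (hv.strengthen v z hzv)
            (by
              intro u hu
              simp only [Finset.mem_erase] at hu ⊢
              exact ⟨hu.1, hNM hu.2.2⟩)
            (by
              rw [Finset.disjoint_left]
              intro u hu huc
              rw [Finset.erase_insert_of_ne (fun h : z = x => hzx h)] at hu
              simp only [Finset.mem_insert] at hu
              simp only [Finset.mem_erase] at huc
              rcases hu with rfl | hu
              · exact huc.1 rfl
              · exact Finset.disjoint_left.mp hLM hu huc.2)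
            (by
              rw [Finset.erase_insert_of_ne (fun h : z = x => hzx h)]
              rw [Finset.disjoint_left]
              intro u hu huc
              simp only [Finset.mem_insert] at huc
              rcases huc with rfl | huc
              · exact hzL2 hu
              · exact Finset.disjoint_left.mp hL2 hu huc)
          rw [Finset.erase_insert_of_ne (fun h : z = x => hzx h),
            Finset.insert_union] at h3
          refine WFS.lam ?_ h3
          simp only [Finset.mem_union, Finset.mem_erase]
          push_neg
          exact ⟨fun _ => hzL, hzL2⟩
        · rw [subst, if_neg hwx, if_neg hc]
          have hwv : w ∉ freeVars v := fun h => hc ⟨h, hxb⟩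
          have hwL2 : w ∉ L₂ := fun hc' => hwv (hv.lin_subset hc')
          have h3 := ih b (by omega) hb (Finset.mem_insert_of_mem hx)
            (hv.strengthen v w hwv)
            (Finset.erase_subset_erase w hNM)
            (by
              rw [Finset.disjoint_left]
              intro u hu huc
              rw [Finset.erase_insert_of_ne hwx] at hu
              simp only [Finset.mem_insert] at hu
              simp only [Finset.mem_erase] at huc
              rcases hu with rfl | hu
              · exact huc.1 rfl
              · exact Finset.disjoint_left.mp hLM hu huc.2)
            (by
              rw [Finset.erase_insert_of_ne hwx]
              rw [Finset.disjoint_left]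
              intro u hu huc
              simp only [Finset.mem_insert] at huc
              rcases huc with rfl | huc
              · exact hwL2 hu
              · exact Finset.disjoint_left.mp hL2 hu huc)
          rw [Finset.erase_insert_of_ne hwx, Finset.insert_union] at h3
          refine WFS.lam ?_ h3
          simp only [Finset.mem_union, Finset.mem_erase]
          push_neg
          exact ⟨fun _ => hw, hwL2⟩
    | lamBang w b =>
      simp only [size] at ht
      cases h with
      | lamBang hw hb =>
        have hwx : w ≠ x := fun h => hw (h ▸ hx)
        have hxb : x ∈ freeVars b :=
          (Finset.mem_sdiff.mp ((WFS.lamBang hw hb).lin_subset hx)).1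
        by_cases hc : w ∈ freeVars v ∧ x ∈ freeVars b
        · rw [subst, if_neg hwx, if_pos hc]
          set z := fresh (allVars b ∪ freeVars v ∪ {x}) with hzdef
          obtain ⟨hzb, hzv, hzx⟩ := fresh_facts b v x
          rw [← hzdef] at hzb hzv hzx
          have hzw : z ≠ w := fun h => hzv (h ▸ hc.1)
          have hzfb : z ∉ freeVars b := fun h => hzb (fv_subset_allVars b h)
          have hzL : z ∉ L := fun hc' => hzfb
            (Finset.mem_sdiff.mp ((WFS.lamBang hw hb).lin_subset hc')).1
          have hzL2 : z ∉ L₂ := fun hc' => hzv (hv.lin_subset hc')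
          have hzM : z ∉ M.erase z := fun hc' => (Finset.mem_erase.mp hc').1 rfl
          have hb1 := hb.strengthen b z hzfb
          rw [Finset.erase_insert_of_ne (fun h : w = z => hzw h.symm)] at hb1
          have h2 := WFS.rename_nl b hb1 (Finset.mem_insert_self w (N.erase z)) hzb hzL
            (by simp only [Finset.mem_insert, Finset.mem_erase]
                push_neg
                exact ⟨hzw, fun h _ => h rfl⟩)
          rw [Finset.erase_insert_eq_erase] at h2
          have hv1 : WFS L₂ (insert z (M.erase z)) v := by
            refine (hv.strengthen v z hzv).weaken v (Finset.subset_insert _ _) ?_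
            rw [Finset.disjoint_left]
            intro u hu huc
            simp only [Finset.mem_insert, Finset.mem_erase] at huc
            rcases huc with rfl | huc
            · exact hzL2 hu
            · exact Finset.disjoint_left.mp hv.disjoint hu huc.2
          have h3 := ih (rename w z b) (by rw [size_rename]; omega) h2 hx hv1
            (by
              intro u hu
              simp only [Finset.mem_insert, Finset.mem_erase] at hu ⊢
              rcases hu with rfl | hu
              · exact Or.inl rfl
              · exact Or.inr ⟨hu.2.1, hNM hu.2.2⟩)
            (by
              rw [Finset.disjoint_left]
              intro u hu huc
              simp only [Finset.mem_insert, Finset.mem_erase] at huc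
              simp only [Finset.mem_erase] at hu
              rcases huc with rfl | huc
              · exact hzL hu.2
              · exact Finset.disjoint_left.mp hLM (Finset.mem_erase.mpr hu) huc.2)
            hL2
          have h4 : WFS ((L.erase x) ∪ L₂) (M.erase z)
              (Term.lamBang z (subst v x (rename w z b))) := by
            refine WFS.lamBang ?_ h3
            simp only [Finset.mem_union, Finset.mem_erase]
            push_neg
            exact ⟨fun _ => hzL, hzL2⟩
          refine h4.weaken _ (Finset.erase_subset _ _) ?_
          rw [Finset.disjoint_left]
          intro u hu huc
          rcases Finset.mem_union.mp hu with hu | hu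
          · exact Finset.disjoint_left.mp hLM hu huc
          · exact Finset.disjoint_left.mp hv.disjoint hu huc
        · rw [subst, if_neg hwx, if_neg hc]
          have hwv : w ∉ freeVars v := fun h => hc ⟨h, hxb⟩
          have hwL2 : w ∉ L₂ := fun hc' => hwv (hv.lin_subset hc')
          have hv1 : WFS L₂ (insert w M) v := by
            refine hv.weaken v (Finset.subset_insert _ _) ?_
            rw [Finset.disjoint_left]
            intro u hu huc
            rcases Finset.mem_insert.mp huc with rfl | huc
            · exact hwL2 hu
            · exact Finset.disjoint_left.mp hv.disjoint hu huc
          have h3 := ih b (by omega) hb hx hv1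
            (Finset.insert_subset_insert w hNM)
            (by
              rw [Finset.disjoint_left]
              intro u hu huc
              rcases Finset.mem_insert.mp huc with rfl | huc
              · exact hw (Finset.mem_of_mem_erase hu)
              · exact Finset.disjoint_left.mp hLM hu huc)
            hL2
          refine WFS.lamBang ?_ h3
          simp only [Finset.mem_union, Finset.mem_erase]
          push_neg
          exact ⟨fun _ => hw, hwL2⟩
theorem WF.toWFS {L N : Finset ℕ} {t : Term} (h : WF L N t) : WFS L N t := by
  induction h with
  | const c => exact WFS.const
  | id x => exact WFS.var_lin (Finset.notMem_empty x)
  | promotion _ ih => exact WFS.bang ih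
  | @dereliction L N t x hxL hxN _ ih =>
    have := ih.demote t (Finset.mem_insert_self x L)
    rwa [Finset.erase_insert hxL] at this
  | @contraction L N t x y z hxy hxL hxN hyL hyN hzL hzN _ ih =>
    have hdisj : Disjoint L (insert x (insert y N)) := ih.disjoint
    by_cases hzx : z = x
    · subst hzx
      rw [subst_var_self]
      refine WFS.sub_nl (size t) t le_rfl ih
        (Finset.mem_insert_of_mem (Finset.mem_insert_self y N))
        (WFS.var_nl (Finset.mem_insert_self z N)) ?_ ?_
      · intro u hu
        simp only [Finset.mem_insert, Finset.mem_erase] at hu ⊢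
        rcases hu.2 with h' | h' | h'
        · exact Or.inl h'
        · exact absurd h' hu.1
        · exact Or.inr h'
      · refine hdisj.mono_right ?_
        intro u hu
        simp only [Finset.mem_insert] at hu ⊢
        tauto
    · by_cases hzy : z = y
      · subst hzy
        have h1 := WFS.sub_nl (size t) t le_rfl ih (Finset.mem_insert_self x _)
          (WFS.var_nl (Finset.mem_insert_self z N)) ?_ ?_
        · rwa [subst_var_self]
        · intro u hu
          simp only [Finset.mem_insert, Finset.mem_erase] at hu ⊢
          rcases hu.2 with h' | h' | h'
          · exact absurd h' hu.1
          · exact Or.inl h'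
          · exact Or.inr h'
        · refine hdisj.mono_right ?_
          intro u hu
          simp only [Finset.mem_insert] at hu ⊢
          tauto
      · have hS : WFS L (insert z (insert x (insert y N))) t := by
          refine ih.weaken t (Finset.subset_insert _ _) ?_
          rw [Finset.disjoint_left]
          intro u hu huc
          rcases Finset.mem_insert.mp huc with rfl | huc
          · exact hzL hu
          · exact Finset.disjoint_left.mp hdisj hu huc
        have h1 := WFS.sub_nl (size t) t le_rfl hS
          (Finset.mem_insert_of_mem (Finset.mem_insert_self x _))
          (WFS.var_nl (Finset.mem_insert_self z (insert y N))) ?_ ?_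
        · have h2 := WFS.sub_nl (size (subst (Term.var z) x t)) _ le_rfl h1
            (show y ∈ insert z (insert y N) from
              Finset.mem_insert_of_mem (Finset.mem_insert_self y N))
            (WFS.var_nl (Finset.mem_insert_self z N)) ?_ ?_
          · exact h2
          · intro u hu
            simp only [Finset.mem_insert, Finset.mem_erase] at hu ⊢
            rcases hu.2 with h' | h' | h'
            · exact Or.inl h'
            · exact absurd h' hu.1
            · exact Or.inr h'
          · rw [Finset.disjoint_left]
            intro u hu huc
            rcases Finset.mem_insert.mp huc with rfl | huc
            · exact hzL hu
            · exact Finset.disjoint_left.mp hdisj hu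
                (Finset.mem_insert_of_mem (Finset.mem_insert_of_mem huc))
        · intro u hu
          simp only [Finset.mem_insert, Finset.mem_erase] at hu ⊢
          rcases hu.2 with h' | h' | h' | h'
          · exact Or.inl h'
          · exact absurd h' hu.1
          · exact Or.inr (Or.inl h')
          · exact Or.inr (Or.inr h')
        · rw [Finset.disjoint_left]
          intro u hu huc
          simp only [Finset.mem_insert] at huc
          rcases huc with rfl | rfl | huc
          · exact hzL hu
          · exact hyL hu
          · exact Finset.disjoint_left.mp hdisj hu (Finset.mem_insert_of_mem
              (Finset.mem_insert_of_mem huc))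
  | @weakening L N t x hxL hxN _ ih =>
    refine ih.weaken t (Finset.subset_insert _ _) ?_
    rw [Finset.disjoint_left]
    intro u hu huc
    rcases Finset.mem_insert.mp huc with rfl | huc
    · exact hxL hu
    · exact Finset.disjoint_left.mp ih.disjoint hu huc
  | @lamI L N t x hxL hxN _ ih =>
    refine WFS.lam hxL ?_
    rwa [Finset.erase_eq_of_notMem hxN]
  | @lamBangI L N t x hxL hxN _ ih => exact WFS.lamBang hxL ih
  | @appE L₁ N₁ L₂ N₂ t₁ t₂ hd _ _ ih₁ ih₂ =>
    have hd' : Disjoint L₁ L₂ :=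
      hd.mono Finset.subset_union_left Finset.subset_union_left
    have h₁ : WFS L₁ (N₁ ∪ N₂) t₁ := by
      refine ih₁.weaken t₁ Finset.subset_union_left ?_
      rw [Finset.disjoint_left]
      intro u hu huc
      rcases Finset.mem_union.mp huc with huc | huc
      · exact Finset.disjoint_left.mp ih₁.disjoint hu huc
      · exact Finset.disjoint_left.mp hd (Finset.mem_union_left _ hu)
          (Finset.mem_union_right _ huc)
    have h₂ : WFS L₂ (N₁ ∪ N₂) t₂ := by
      refine ih₂.weaken t₂ Finset.subset_union_right ?_
      rw [Finset.disjoint_left]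
      intro u hu huc
      rcases Finset.mem_union.mp huc with huc | huc
      · exact Finset.disjoint_left.mp hd (Finset.mem_union_right _ huc)
          (Finset.mem_union_left _ hu)
      · exact Finset.disjoint_left.mp ih₂.disjoint hu huc
    exact WFS.app hd' h₁ h₂
theorem WF.disjointLN {L N : Finset ℕ} {t : Term} (h : WF L N t) : Disjoint L N := by
  induction h with
  | const c => simp
  | id x => simp
  | promotion _ ih => exact ih
  | @dereliction L N t x hxL hxN _ ih =>
    rw [Finset.disjoint_left]
    intro u hu huc
    rcases Finset.mem_insert.mp huc with rfl | huc
    · exact hxL hu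
    · exact Finset.disjoint_left.mp ih (Finset.mem_insert_of_mem hu) huc
  | @contraction L N t x y z hxy hxL hxN hyL hyN hzL hzN _ ih =>
    rw [Finset.disjoint_left]
    intro u hu huc
    rcases Finset.mem_insert.mp huc with rfl | huc
    · exact hzL hu
    · exact Finset.disjoint_left.mp ih hu
        (Finset.mem_insert_of_mem (Finset.mem_insert_of_mem huc))
  | @weakening L N t x hxL hxN _ ih =>
    rw [Finset.disjoint_left]
    intro u hu huc
    rcases Finset.mem_insert.mp huc with rfl | huc
    · exact hxL hu
    · exact Finset.disjoint_left.mp ih hu huc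
  | @lamI L N t x hxL hxN _ ih =>
    exact ih.mono_left (Finset.subset_insert _ _)
  | @lamBangI L N t x hxL hxN _ ih =>
    rw [Finset.disjoint_left]
    intro u hu huc
    exact Finset.disjoint_left.mp ih hu (Finset.mem_insert_of_mem huc)
  | @appE L₁ N₁ L₂ N₂ t₁ t₂ hd _ _ ih₁ ih₂ =>
    rw [Finset.disjoint_left]
    intro u hu huc
    rcases Finset.mem_union.mp hu with hu | hu <;>
      rcases Finset.mem_union.mp huc with huc | huc
    · exact Finset.disjoint_left.mp ih₁ hu huc
    · exact Finset.disjoint_left.mp hd (Finset.mem_union_left _ hu)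
        (Finset.mem_union_right _ huc)
    · exact Finset.disjoint_left.mp hd (Finset.mem_union_right _ huc)
        (Finset.mem_union_left _ hu) |>.elim
    · exact Finset.disjoint_left.mp ih₂ hu huc

theorem WF.weaken_subset {L N N' : Finset ℕ} {t : Term} (h : WF L N t)
    (hsub : N ⊆ N') (hdis : Disjoint L N') : WF L N' t := by
  have key : ∀ S : Finset ℕ, Disjoint S L → Disjoint S N → WF L (N ∪ S) t := by
    intro S
    induction S using Finset.induction_on with
    | empty => intro _ _; simpa using h
    | @insert s S hsS ih =>
      intro h1 h2
      have hsL : s ∉ L := fun hc =>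
        Finset.disjoint_left.mp h1 (Finset.mem_insert_self _ _) hc
      have hsN : s ∉ N := fun hc =>
        Finset.disjoint_left.mp h2 (Finset.mem_insert_self _ _) hc
      have hw := WF.weakening hsL (show s ∉ N ∪ S by
        simp only [Finset.mem_union]; push_neg; exact ⟨hsN, hsS⟩)
        (ih (h1.mono_left (Finset.subset_insert _ _))
          (h2.mono_left (Finset.subset_insert _ _)))
      have : insert s (N ∪ S) = N ∪ insert s S := by
        ext u; simp only [Finset.mem_insert, Finset.mem_union]; tauto
      rwa [this] at hw
  have h1 := key (N' \ N) (hdis.mono_right (Finset.sdiff_subset)).symm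
    Finset.sdiff_disjoint
  rwa [Finset.union_sdiff_of_subset hsub] at h1

theorem WF.renameNL {L M : Finset ℕ} {t : Term} {x p : ℕ} (h : WF L (insert x M) t)
    (hxL : x ∉ L) (hxM : x ∉ M) (hpL : p ∉ L) (hpM : p ∉ M) (hpx : p ≠ x) :
    WF L (insert p M) (subst (Term.var p) x t) := by
  set w := fresh (L ∪ M ∪ freeVars t ∪ {x, p}) with hwdef
  have hw := fresh_not_mem (L ∪ M ∪ freeVars t ∪ {x, p})
  rw [← hwdef] at hw
  simp only [Finset.mem_union, Finset.mem_insert, Finset.mem_singleton] at hw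
  push_neg at hw
  obtain ⟨⟨⟨hwL, hwM⟩, hwt⟩, hwx, hwp⟩ := hw
  have h1 : WF L (insert x (insert w M)) t := by
    have h2 := WF.weakening (t := t) hwL (show w ∉ insert x M by
      simp only [Finset.mem_insert]; push_neg; exact ⟨hwx, hwM⟩) h
    rwa [Finset.insert_comm] at h2
  have h3 := WF.contraction (x := x) (y := w) (z := p) (fun h => hwx h.symm)
    hxL hxM hwL hwM hpL hpM h1
  have h4 : subst (Term.var p) w (subst (Term.var p) x t) = subst (Term.var p) x t := by
    refine subst_not_free _ _ ?_
    intro hc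
    have := fv_subst_subset (Term.var p) x t hc
    rcases Finset.mem_union.mp this with h' | h'
    · exact hwt (Finset.mem_of_mem_erase h')
    · simp only [freeVars, Finset.mem_singleton] at h'
      exact hwp h'
  rwa [h4] at h3
set_option maxHeartbeats 1000000 in
theorem WF.merge : ∀ (N : Finset ℕ) {L₁ N₁ L₂ N₂ : Finset ℕ} {a b : Term},
    Disjoint (L₁ ∪ N₁) (L₂ ∪ N₂) → Disjoint (L₁ ∪ N₁ ∪ L₂ ∪ N₂) N →
    WF L₁ (N₁ ∪ N) a → WF L₂ (N₂ ∪ N) b → WF (L₁ ∪ L₂) (N₁ ∪ N₂ ∪ N) (Term.app a b) := by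
  intro N
  induction N using Finset.induction_on with
  | empty =>
    intro L₁ N₁ L₂ N₂ a b hd _ ha hb
    rw [Finset.union_empty] at ha hb ⊢
    exact WF.appE hd ha hb
  | @insert n N hnN ih =>
    intro L₁ N₁ L₂ N₂ a b hd hdN ha hb
    have hn : n ∉ L₁ ∧ n ∉ N₁ ∧ n ∉ L₂ ∧ n ∉ N₂ := by
      have := Finset.disjoint_right.mp hdN (Finset.mem_insert_self n N)
      simp only [Finset.mem_union] at this
      push_neg at this
      tauto
    obtain ⟨S, hSdef⟩ : ∃ S, S = L₁ ∪ N₁ ∪ L₂ ∪ N₂ ∪ N ∪ {n} ∪ allVars a ∪ allVars b :=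
      ⟨_, rfl⟩
    obtain ⟨p, hpS⟩ : ∃ p, p ∉ S := ⟨fresh S, fresh_not_mem S⟩
    obtain ⟨q, hqS'⟩ : ∃ q, q ∉ insert p S := ⟨fresh (insert p S), fresh_not_mem _⟩
    have hqp : q ≠ p := fun h => hqS' (h ▸ Finset.mem_insert_self p S)
    have hqS : q ∉ S := fun h => hqS' (Finset.mem_insert_of_mem h)
    have hp : p ∉ L₁ ∧ p ∉ N₁ ∧ p ∉ L₂ ∧ p ∉ N₂ ∧ p ∉ N ∧ p ≠ n ∧
        p ∉ allVars a ∧ p ∉ allVars b := by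
      rw [hSdef] at hpS
      simp only [Finset.mem_union, Finset.mem_singleton] at hpS
      push_neg at hpS
      tauto
    have hq : q ∉ L₁ ∧ q ∉ N₁ ∧ q ∉ L₂ ∧ q ∉ N₂ ∧ q ∉ N ∧ q ≠ n ∧
        q ∉ allVars a ∧ q ∉ allVars b := by
      rw [hSdef] at hqS
      simp only [Finset.mem_union, Finset.mem_singleton] at hqS
      push_neg at hqS
      tauto
    obtain ⟨hp1, hp2, hp3, hp4, hp5, hp6, hp7, hp8⟩ := hp
    obtain ⟨hq1, hq2, hq3, hq4, hq5, hq6, hq7, hq8⟩ := hq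
    obtain ⟨hn1, hn2, hn3, hn4⟩ := hn
    -- rename n to p in a
    have ha1 : WF L₁ (insert n (N₁ ∪ N)) a := by
      have : N₁ ∪ insert n N = insert n (N₁ ∪ N) := by
        ext u; simp only [Finset.mem_union, Finset.mem_insert]; tauto
      rwa [this] at ha
    have ha2 := WF.renameNL ha1 hn1
      (by simp only [Finset.mem_union]; push_neg; exact ⟨hn2, hnN⟩) hp1
      (by simp only [Finset.mem_union]; push_neg; exact ⟨hp2, hp5⟩) hp6
    have ha3 : WF L₁ ((insert p N₁) ∪ N) (subst (Term.var p) n a) := by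
      have : insert p (N₁ ∪ N) = (insert p N₁) ∪ N := by
        ext u; simp only [Finset.mem_union, Finset.mem_insert]; tauto
      rwa [this] at ha2
    -- rename n to q in b
    have hb1 : WF L₂ (insert n (N₂ ∪ N)) b := by
      have : N₂ ∪ insert n N = insert n (N₂ ∪ N) := by
        ext u; simp only [Finset.mem_union, Finset.mem_insert]; tauto
      rwa [this] at hb
    have hb2 := WF.renameNL hb1 hn3
      (by simp only [Finset.mem_union]; push_neg; exact ⟨hn4, hnN⟩) hq3
      (by simp only [Finset.mem_union]; push_neg; exact ⟨hq4, hq5⟩) hq6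
    have hb3 : WF L₂ ((insert q N₂) ∪ N) (subst (Term.var q) n b) := by
      have : insert q (N₂ ∪ N) = (insert q N₂) ∪ N := by
        ext u; simp only [Finset.mem_union, Finset.mem_insert]; tauto
      rwa [this] at hb2
    -- apply IH
    have hIH := ih (N₁ := insert p N₁) (N₂ := insert q N₂)
      (by
        rw [Finset.disjoint_left]
        intro u hu huc
        simp only [Finset.mem_union, Finset.mem_insert] at hu huc
        rcases hu with hu | rfl | hu
        · rcases huc with huc | rfl | huc
          · exact Finset.disjoint_left.mp hd (Finset.mem_union_left _ hu)
              (Finset.mem_union_left _ huc)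
          · exact hq1 hu
          · exact Finset.disjoint_left.mp hd (Finset.mem_union_left _ hu)
              (Finset.mem_union_right _ huc)
        · rcases huc with huc | rfl | huc
          · exact hp3 huc
          · exact hqp rfl
          · exact hp4 huc
        · rcases huc with huc | rfl | huc
          · exact Finset.disjoint_left.mp hd (Finset.mem_union_right _ hu)
              (Finset.mem_union_left _ huc)
          · exact hq2 hu
          · exact Finset.disjoint_left.mp hd (Finset.mem_union_right _ hu)
              (Finset.mem_union_right _ huc))
      (by
        rw [Finset.disjoint_left]
        intro u hu huc
        simp only [Finset.mem_union, Finset.mem_insert] at hu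
        rcases hu with ((hu | rfl | hu) | hu) | rfl | hu
        · exact Finset.disjoint_left.mp hdN
            (by simp only [Finset.mem_union]; tauto) (Finset.mem_insert_of_mem huc)
        · exact hp5 huc
        · exact Finset.disjoint_left.mp hdN
            (by simp only [Finset.mem_union]; tauto) (Finset.mem_insert_of_mem huc)
        · exact Finset.disjoint_left.mp hdN
            (by simp only [Finset.mem_union]; tauto) (Finset.mem_insert_of_mem huc)
        · exact hq5 huc
        · exact Finset.disjoint_left.mp hdN
            (by simp only [Finset.mem_union]; tauto) (Finset.mem_insert_of_mem huc))
      ha3 hb3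
    -- contract p and q back to n
    have hctx : insert p N₁ ∪ insert q N₂ ∪ N = insert p (insert q (N₁ ∪ N₂ ∪ N)) := by
      ext u; simp only [Finset.mem_union, Finset.mem_insert]; tauto
    rw [hctx] at hIH
    have hC := WF.contraction (x := p) (y := q) (z := n) (Ne.symm hqp)
      (by simp only [Finset.mem_union]; push_neg; exact ⟨hp1, hp3⟩)
      (by simp only [Finset.mem_union]; push_neg; exact ⟨⟨hp2, hp4⟩, hp5⟩)
      (by simp only [Finset.mem_union]; push_neg; exact ⟨hq1, hq3⟩)
      (by simp only [Finset.mem_union]; push_neg; exact ⟨⟨hq2, hq4⟩, hq5⟩)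
      (by simp only [Finset.mem_union]; push_neg; exact ⟨hn1, hn3⟩)
      (by simp only [Finset.mem_union]; push_neg; exact ⟨⟨hn2, hn4⟩, hnN⟩)
      hIH
    have hterm : subst (Term.var n) q (subst (Term.var n) p
        (Term.app (subst (Term.var p) n a) (subst (Term.var q) n b))) = Term.app a b := by
      have e1 : subst (Term.var n) p (subst (Term.var p) n a) = a :=
        subst_roundtrip hp6 a hp7
    
      have hpfb : p ∉ freeVars (subst (Term.var q) n b) := by
        intro hc
        rcases Finset.mem_union.mp (fv_subst_subset _ _ _ hc) with h' | h'
        · exact hp8 (fv_subset_allVars b (Finset.mem_of_mem_erase h'))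
        · simp only [freeVars, Finset.mem_singleton] at h'
          exact hqp h'.symm
      have e2 : subst (Term.var n) p (subst (Term.var q) n b) = subst (Term.var q) n b :=
        subst_not_free _ _ hpfb
      have hqfa : q ∉ freeVars a := fun hc => hq7 (fv_subset_allVars a hc)
      have e3 : subst (Term.var n) q a = a := subst_not_free _ _ hqfa
      have e4 : subst (Term.var n) q (subst (Term.var q) n b) = b :=
        subst_roundtrip hq6 b hq8
      simp only [subst, e1, e2, e3, e4]
    rw [hterm] at hC
    have hctx2 : insert n (N₁ ∪ N₂ ∪ N) = N₁ ∪ N₂ ∪ insert n N := by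
      ext u; simp only [Finset.mem_union, Finset.mem_insert]; tauto
    rwa [hctx2] at hC

theorem WFS.toWF : ∀ t {L N : Finset ℕ}, WFS L N t → WF L N t := by
  intro t
  induction t with
  | var x =>
    intro L N h
    cases h with
    | var_lin hx =>
      exact (WF.id x).weaken_subset (Finset.empty_subset N) (by simpa using hx)
    | var_nl hx =>
      have h1 : WF ∅ {x} (Term.var x) := by
        have := WF.dereliction (L := ∅) (N := ∅) (Finset.notMem_empty x)
          (Finset.notMem_empty x) (by simpa using WF.id x)
        simpa using this
      exact h1.weaken_subset (Finset.singleton_subset_iff.mpr hx) (by simp)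
  | const c =>
    intro L N h
    cases h
    exact (WF.const c).weaken_subset (Finset.empty_subset N) (by simp)
  | bang t' ih =>
    intro L N h
    cases h with
    | bang h' => exact WF.promotion (ih h')
  | app a b iha ihb =>
    intro L N h
    cases h with
    | @app L₁ L₂ N a b hd ha hb =>
      have h1 : WF L₁ (∅ ∪ N) a := by rw [Finset.empty_union]; exact iha ha
      have h2 : WF L₂ (∅ ∪ N) b := by rw [Finset.empty_union]; exact ihb hb
      have := WF.merge N (L₁ := L₁) (N₁ := ∅) (L₂ := L₂) (N₂ := ∅)
        (by simpa using hd)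
        (by
          rw [Finset.disjoint_left]
          intro u hu huc
          simp only [Finset.union_empty, Finset.mem_union] at hu
          rcases hu with hu | hu
          · exact Finset.disjoint_left.mp ha.disjoint hu huc
          · exact Finset.disjoint_left.mp hb.disjoint hu huc)
        h1 h2
      simpa using this
  | lam x b ihb =>
    intro L N h
    cases h with
    | lam hx hb =>
      have h1 := WF.lamI hx (Finset.notMem_erase x N) (ihb hb)
      exact h1.weaken_subset (Finset.erase_subset x N) (WFS.lam hx hb).disjoint
  | lamBang x b ihb =>
    intro L N h
    cases h with
    | lamBang hx hb =>
      by_cases hxN : x ∈ N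
      · have h0 : WF L (insert x (N.erase x)) b := by
          rw [insert_erase_eq]; exact ihb hb
        have h1 := WF.lamBangI hx (Finset.notMem_erase x N) h0
        exact h1.weaken_subset (Finset.erase_subset x N) (WFS.lamBang hx hb).disjoint
      · exact WF.lamBangI hx hxN (ihb hb)
theorem wfs_bit (N : Finset ℕ) (b : Bool) : WFS ∅ N (bit b) := by
  cases b <;> exact WFS.const

theorem wfs_idT (N : Finset ℕ) : WFS ∅ N idT := by
  refine WFS.lam (Finset.notMem_empty _) ?_
  exact WFS.var_lin (Finset.notMem_erase _ _)

theorem wfs_nilT (N : Finset ℕ) : WFS ∅ N nilT := by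
  refine WFS.lamBang (Finset.notMem_empty _) ?_
  refine WFS.lamBang (Finset.notMem_empty _) ?_
  have := WFS.app (L₁ := ∅) (L₂ := ∅) (N := insert 1 (insert 0 (insert 0 N)))
    (by simp)
    (WFS.var_nl (Finset.mem_insert_of_mem (Finset.mem_insert_self _ _)))
    (wfs_idT _)
  simpa using this

theorem wfs_pairV {a b : Term} (ha : ∀ N, WFS ∅ N a) (hb : ∀ N, WFS ∅ N b)
    (N : Finset ℕ) : WFS ∅ N (pairV a b) := by
  refine WFS.lamBang (Finset.notMem_empty _) ?_
  refine WFS.lamBang (Finset.notMem_empty _) ?_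
  have h1 := WFS.app (L₁ := ∅) (L₂ := ∅) (N := insert 1 (insert 0 (insert 0 N)))
    (by simp)
    (WFS.var_nl (Finset.mem_insert_self _ _))
    (ha _)
  have h2 := WFS.app (L₁ := ∅) (L₂ := ∅) (N := insert 1 (insert 0 (insert 0 N)))
    (by simpa using h1) ((by simpa using h1 : WFS ∅ _ _)) (hb _)
  simpa using h2

theorem wfs_mkPair (a b : Bool) (N : Finset ℕ) : WFS ∅ N (mkPair (bit a) (bit b)) :=
  wfs_pairV (fun _ => wfs_bit _ a) (wfs_pairV (fun _ => wfs_bit _ b) wfs_nilT) N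

theorem GateApp.out_wfs {g φ s} (hg : GateApp g φ s) :
    ∀ u ∈ s.support, ∀ N, WFS ∅ N u := by
  cases hg with
  | had b =>
    intro u hu N
    cases b <;>
    · simp only [hadOut] at hu
      have h1 := Finsupp.support_smul hu
      have h2 : u ∈ (Finsupp.single (bit false) (1:ℂ)).support ∪
          (Finsupp.single (bit true) (1:ℂ)).support := by
        first
        | exact Finsupp.support_add h1
        | exact Finsupp.support_sub h1
      rcases Finset.mem_union.mp h2 with h3 | h3 <;>
        · have := Finsupp.support_single_subset h3
          rw [Finset.mem_singleton] at this
          subst this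
          exact wfs_bit _ _
  | gX b =>
    intro u hu N
    have := Finsupp.support_single_subset hu
    rw [Finset.mem_singleton] at this
    subst this
    exact wfs_bit _ _
  | gY b =>
    intro u hu N
    have h1 := Finsupp.support_smul hu
    have := Finsupp.support_single_subset h1
    rw [Finset.mem_singleton] at this
    subst this
    exact wfs_bit _ _
  | gZ b =>
    intro u hu N
    have h1 := Finsupp.support_smul hu
    have := Finsupp.support_single_subset h1
    rw [Finset.mem_singleton] at this
    subst this
    exact wfs_bit _ _
  | gS b =>
    intro u hu N
    have h1 := Finsupp.support_smul hu
    have := Finsupp.support_single_subset h1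
    rw [Finset.mem_singleton] at this
    subst this
    exact wfs_bit _ _
  | gR b =>
    intro u hu N
    have h1 := Finsupp.support_smul hu
    have := Finsupp.support_single_subset h1
    rw [Finset.mem_singleton] at this
    subst this
    exact wfs_bit _ _
  | gCnot a b =>
    intro u hu N
    have := Finsupp.support_single_subset hu
    rw [Finset.mem_singleton] at this
    subst this
    exact wfs_mkPair _ _ _
theorem fv_bit (b : Bool) : freeVars (bit b) = ∅ := by cases b <;> rfl

theorem fv_mkPair (a b : Bool) : freeVars (mkPair (bit a) (bit b)) = ∅ := by
  cases a <;> cases b <;> decide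

theorem SubStep.preserve : ∀ {t h s}, SubStep t h s → ∀ {L N : Finset ℕ},
    WFS L N t → ∀ u ∈ s.support, WFS L N u := by
  intro t h s hs
  induction hs with
  | @app1 t₁ h₁ s₁ t₂ hsub ih =>
    intro L N hW u hu
    rcases Finset.mem_image.mp (Finsupp.mapDomain_support hu) with ⟨u', hu', rfl⟩
    cases hW with
    | app hd ha hb => exact WFS.app hd (ih ha u' hu') hb
  | @app2 v t₂ h₂ s₂ hv hsub ih =>
    intro L N hW u hu
    rcases Finset.mem_image.mp (Finsupp.mapDomain_support hu) with ⟨u', hu', rfl⟩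
    cases hW with
    | app hd ha hb => exact WFS.app hd ha (ih hb u' hu')
  | @beta x E v hval =>
    intro L N hW u hu
    have := Finsupp.support_single_subset hu
    rw [Finset.mem_singleton] at this
    subst this
    cases hW with
    | @app L₁ L₂ N _ _ hd hlam hv =>
      cases hlam with
      | lam hx hE =>
        have hres := WFS.sub_lin _ _ le_rfl hE (Finset.mem_insert_self x L₁)
          hv (Finset.erase_subset x N) ?_ ?_
        · rwa [Finset.erase_insert hx] at hres
        · rw [Finset.erase_insert hx]
          exact (WFS.lam hx hE).disjoint
        · rw [Finset.erase_insert hx]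
          exact hd.symm
  | @bangBeta1 x E t' hxE =>
    intro L N hW u hu
    have := Finsupp.support_single_subset hu
    rw [Finset.mem_singleton] at this
    subst this
    cases hW with
    | @app L₁ L₂ N _ _ hd hlam hbang =>
      cases hlam with
      | lamBang hx hE =>
        cases hbang with
        | bang ht' =>
          have hres := WFS.sub_nl _ _ le_rfl hE (Finset.mem_insert_self x N)
            ht' (by rw [Finset.erase_insert_eq_erase]; exact Finset.erase_subset x N)
            (WFS.lamBang hx hE).disjoint
          rw [Finset.union_empty]
          exact hres
  | @bangBeta2 x E t' hxE =>
    intro L N hW u hu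
    have := Finsupp.support_single_subset hu
    rw [Finset.mem_singleton] at this
    subst this
    cases hW with
    | @app L₁ L₂ N _ _ hd hlam hbang =>
      cases hlam with
      | lamBang hx hE =>
        have h1 := hE.strengthen _ x hxE
        rw [Finset.erase_insert_eq_erase] at h1
        have h2 := h1.weaken _ (Finset.erase_subset x N) (WFS.lamBang hx hE).disjoint
        cases hbang with
        | bang _ => rw [Finset.union_empty]; exact h2
  | @gate g φ s hg =>
    intro L N hW u hu
    cases hW with
    | @app L₁ L₂ N _ _ hd hc hφ =>
      have hL₂ : L₂ = ∅ := by
        refine Finset.subset_empty.mp ?_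
        cases hg with
        | gCnot a b => exact (fv_mkPair a b) ▸ hφ.lin_subset
        | had b => exact (fv_bit b) ▸ hφ.lin_subset
        | gX b => exact (fv_bit b) ▸ hφ.lin_subset
        | gY b => exact (fv_bit b) ▸ hφ.lin_subset
        | gZ b => exact (fv_bit b) ▸ hφ.lin_subset
        | gS b => exact (fv_bit b) ▸ hφ.lin_subset
        | gR b => exact (fv_bit b) ▸ hφ.lin_subset
      cases hc
      subst hL₂
      rw [Finset.union_empty]
      exact hg.out_wfs u hu N
/-- Reduction in λ_q preserves well-formedness: if t is
well-formed and |H;t⟩ makes one step of the operational model to the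
superposition ψ' = Σᵢ cᵢ |Hᵢ′;tᵢ′⟩, then every computational register tᵢ′
appearing in ψ' is well-formed. -/
theorem wf_preserved_by_step (H : List Term) (t : Term) (hwf : WellFormed t)
    (ψ' : QState) (hstep : StateStep (Finsupp.single (H, t) (1 : ℂ)) ψ') :
    ∀ c ∈ ψ'.support, WellFormed c.2 := by
  obtain ⟨F, hF, hsum⟩ := hstep
  have hmem : (H, t) ∈ (Finsupp.single (H, t) (1 : ℂ)).support := by
    rw [Finsupp.support_single_ne_zero _ one_ne_zero]
    exact Finset.mem_singleton_self _
  have hC := hF (H, t) hmem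
  have hψ : ψ' = F (H, t) := by
    rw [hsum, Finsupp.sum_single_index (by simp), one_smul]
  rw [← hψ] at hC
  clear hψ hF hmem
  cases hC with
  | @sub _ _ h s hsub =>
    intro c hc
    rcases Finset.mem_image.mp (Finsupp.mapDomain_support hc) with ⟨u, hu, rfl⟩
    obtain ⟨L, N, hWF⟩ := hwf
    exact ⟨L, N, (hsub.preserve hWF.toWFS u hu).toWF _⟩
  | idStep _ =>
    intro c hc
    have := Finsupp.support_single_subset hc
    rw [Finset.mem_singleton] at this
    subst this
    exact hwf

end LambdaQ
end

section
/- Starting from a definite well-formed initial term, any !-suspension subterm occurring during reduction is definite with respect to the computational basis: in every state reachable from an initial basis configuration |H;t⟩ by steps of the operational model of λ_q, at every subterm position of the computational register at which a !-suspension !s occurs, the term !s is syntactically identical in all configurations in the support of the state. -/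
namespace LambdaQ

open Term

/-- The subterm of a term at a given path (0 = body / left child, 1 = right child). -/
def subtermAt : Term → List ℕ → Option Term
  | t, [] => some t
  | .lam _ b, 0 :: p => subtermAt b p
  | .lamBang _ b, 0 :: p => subtermAt b p
  | .bang b, 0 :: p => subtermAt b p
  | .app a _, 0 :: p => subtermAt a p
  | .app _ b, 1 :: p => subtermAt b p
  | _, _ => none

/-! ### Auxiliary development -/

/-- `nbv w t`: the variable `w` has no free occurrence inside any `bang`
subterm of `t`. -/
def nbv (w : ℕ) : Term → Prop
  | var _ => True
  | const _ => True
  | app a b => nbv w a ∧ nbv w b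
  | bang t => w ∉ freeVars t
  | lam y b => y = w ∨ nbv w b
  | lamBang y b => y = w ∨ nbv w b

/-- `NL t`: every `lam`-bound (linear) variable of `t` has no free occurrence
under a `bang` inside its scope. -/
def NL : Term → Prop
  | var _ => True
  | const _ => True
  | app a b => NL a ∧ NL b
  | bang t => NL t
  | lam y b => NL b ∧ nbv y b
  | lamBang _ b => NL b

/-- Agreement: identical terms except possibly at bit-constant positions that
are not under a `bang`. -/
inductive Ag : Term → Term → Prop
  | bit {c c'} : (c = Const.zero ∨ c = Const.one) → (c' = Const.zero ∨ c' = Const.one) →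
      Ag (const c) (const c')
  | var (x) : Ag (var x) (var x)
  | const (c) : Ag (const c) (const c)
  | lam {b b'} (x) : Ag b b' → Ag (lam x b) (lam x b')
  | lamBang {b b'} (x) : Ag b b' → Ag (lamBang x b) (lamBang x b')
  | app {a a' b b'} : Ag a a' → Ag b b' → Ag (app a b) (app a' b')
  | bang (t) : Ag (bang t) (bang t)

theorem Ag.refl : ∀ t, Ag t t := by
  intro t
  induction t with
  | var x => exact .var x
  | lam x b ih => exact .lam x ih
  | app a b iha ihb => exact .app iha ihb
  | const c => exact .const c
  | bang t _ => exact .bang t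
  | lamBang x b ih => exact .lamBang x ih

theorem Ag.symm {a b} (h : Ag a b) : Ag b a := by
  induction h with
  | bit h1 h2 => exact .bit h2 h1
  | var x => exact .var x
  | const c => exact .const c
  | lam x _ ih => exact .lam x ih
  | lamBang x _ ih => exact .lamBang x ih
  | app _ _ ih1 ih2 => exact .app ih1 ih2
  | bang t => exact .bang t

theorem Ag.fv {a b} (h : Ag a b) : freeVars a = freeVars b := by
  induction h with
  | bit _ _ => rfl
  | var x => rfl
  | const c => rfl
  | lam x _ ih => simp [freeVars, ih]
  | lamBang x _ ih => simp [freeVars, ih]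
  | app _ _ ih1 ih2 => simp [freeVars, ih1, ih2]
  | bang t => rfl

theorem Ag.av {a b} (h : Ag a b) : allVars a = allVars b := by
  induction h with
  | bit _ _ => rfl
  | var x => rfl
  | const c => rfl
  | lam x _ ih => simp [allVars, ih]
  | lamBang x _ ih => simp [allVars, ih]
  | app _ _ ih1 ih2 => simp [allVars, ih1, ih2]
  | bang t => rfl

theorem fv_rename (y z : ℕ) : ∀ t, freeVars (rename y z t) ⊆ (freeVars t \ {y}) ∪ {z} := by
  intro t
  induction t with
  | var x =>
      simp only [rename]
      split
      · simp [freeVars]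
      · next h =>
          intro w hw
          simp only [freeVars, Finset.mem_singleton] at hw
          subst hw
          simp only [freeVars, Finset.mem_union, Finset.mem_sdiff, Finset.mem_singleton]
          exact Or.inl ⟨by simp, h⟩
  | lam x b ih =>
      simp only [rename]
      split
      · next h =>
          subst h
          intro w hw
          simp only [freeVars, Finset.mem_sdiff, Finset.mem_singleton] at hw
          simp [freeVars, hw.1, hw.2]
      · next h =>
          intro w hw
          simp only [freeVars, Finset.mem_sdiff, Finset.mem_singleton] at hw
          have := ih hw.1
          simp only [Finset.mem_union, Finset.mem_sdiff, Finset.mem_singleton] at this ⊢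
          rcases this with ⟨hb, hy⟩ | hz
          · left; exact ⟨by simp [freeVars, hb, hw.2], hy⟩
          · right; exact hz
  | app a b iha ihb =>
      simp only [rename, freeVars]
      intro w hw
      simp only [Finset.mem_union] at hw
      rcases hw with hw | hw
      · have := iha hw
        simp only [Finset.mem_union, Finset.mem_sdiff, Finset.mem_singleton] at this ⊢
        rcases this with ⟨h1, h2⟩ | h; · left; exact ⟨by simp [h1], h2⟩
        · right; exact h
      · have := ihb hw
        simp only [Finset.mem_union, Finset.mem_sdiff, Finset.mem_singleton] at this ⊢
        rcases this with ⟨h1, h2⟩ | h; · left; exact ⟨by simp [h1], h2⟩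
        · right; exact h
  | const c => simp [rename, freeVars]
  | bang t ih => exact ih
  | lamBang x b ih =>
      simp only [rename]
      split
      · next h =>
          subst h
          intro w hw
          simp only [freeVars, Finset.mem_sdiff, Finset.mem_singleton] at hw
          simp [freeVars, hw.1, hw.2]
      · next h =>
          intro w hw
          simp only [freeVars, Finset.mem_sdiff, Finset.mem_singleton] at hw
          have := ih hw.1
          simp only [Finset.mem_union, Finset.mem_sdiff, Finset.mem_singleton] at this ⊢
          rcases this with ⟨hb, hy⟩ | hz
          · left; exact ⟨by simp [freeVars, hb, hw.2], hy⟩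
          · right; exact hz

theorem rename_notfree (y z : ℕ) : ∀ t, y ∉ freeVars t → rename y z t = t := by
  intro t
  induction t with
  | var x => intro h; simp [freeVars] at h; simp [rename, Ne.symm h]
  | lam x b ih =>
      intro h
      simp only [rename]
      split
      · rfl
      · next hx =>
          simp only [freeVars, Finset.mem_sdiff, Finset.mem_singleton, not_and, not_not] at h
          rw [ih (fun hy => hx (h hy).symm)]
  | app a b iha ihb =>
      intro h
      simp only [freeVars, Finset.mem_union, not_or] at h
      simp [rename, iha h.1, ihb h.2]
  | const c => intro _; rfl
  | bang t ih => intro h; simp only [rename]; rw [ih h]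
  | lamBang x b ih =>
      intro h
      simp only [rename]
      split
      · rfl
      · next hx =>
          simp only [freeVars, Finset.mem_sdiff, Finset.mem_singleton, not_and, not_not] at h
          rw [ih (fun hy => hx (h hy).symm)]

theorem subst_notfree (v : Term) (x : ℕ) : ∀ t, x ∉ freeVars t → subst v x t = t := by
  intro t
  induction t with
  | var y =>
      intro h; simp only [freeVars, Finset.mem_singleton] at h
      simp [subst, Ne.symm h]
  | lam y b ih =>
      intro h
      simp only [freeVars, Finset.mem_sdiff, Finset.mem_singleton, not_and, not_not] at h
      simp only [subst]
      split
      · rfl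
      · next hyx =>
          have hxb : x ∉ freeVars b := fun hx => hyx (h hx).symm
          rw [if_neg (fun hc => hxb hc.2), ih hxb]
  | app a b iha ihb =>
      intro h
      simp only [freeVars, Finset.mem_union, not_or] at h
      simp only [subst]; rw [iha h.1, ihb h.2]
  | const c => intro _; simp [subst]
  | bang t ih => intro h; simp only [subst]; rw [ih h]
  | lamBang y b ih =>
      intro h
      simp only [freeVars, Finset.mem_sdiff, Finset.mem_singleton, not_and, not_not] at h
      simp only [subst]
      split
      · rfl
      · next hyx =>
          have hxb : x ∉ freeVars b := fun hx => hyx (h hx).symm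
          rw [if_neg (fun hc => hxb hc.2), ih hxb]

theorem fv_subst (v : Term) (x : ℕ) :
    ∀ n t, size t ≤ n → freeVars (subst v x t) ⊆ (freeVars t \ {x}) ∪ freeVars v := by
  intro n
  induction n with
  | zero => intro t ht; cases t <;> simp [size] at ht
  | succ n ih =>
    intro t ht
    cases t with
    | var y =>
        simp only [subst]
        split
        · next h => subst h; exact Finset.subset_union_right
        · next h =>
            intro w hw
            simp only [freeVars, Finset.mem_singleton] at hw
            subst hw
            simp only [freeVars, Finset.mem_union, Finset.mem_sdiff, Finset.mem_singleton]
            exact Or.inl ⟨by simp, h⟩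
    | const c => simp [subst, freeVars]
    | app a b =>
        simp only [size] at ht
        have ha := ih a (by omega)
        have hb := ih b (by omega)
        simp only [subst, freeVars]
        intro w hw
        simp only [Finset.mem_union] at hw
        simp only [Finset.mem_union, Finset.mem_sdiff, Finset.mem_singleton]
        rcases hw with hw | hw
        · have := ha hw
          simp only [Finset.mem_union, Finset.mem_sdiff, Finset.mem_singleton] at this
          tauto
        · have := hb hw
          simp only [Finset.mem_union, Finset.mem_sdiff, Finset.mem_singleton] at this
          tauto
    | bang b =>
        simp only [size] at ht
        simp only [subst, freeVars]
        exact ih b (by omega)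
    | lam y b =>
        simp only [size] at ht
        simp only [subst]
        split
        · next h =>
            subst h
            intro w hw
            simp only [freeVars, Finset.mem_sdiff, Finset.mem_singleton] at hw ⊢
            simp only [Finset.mem_union, Finset.mem_sdiff, Finset.mem_singleton]
            exact Or.inl ⟨⟨hw.1, hw.2⟩, hw.2⟩
        · next hyx =>
            split
            · next hc =>
                set f := fresh (allVars b ∪ freeVars v ∪ {x}) with hf
                have hfv : f ∉ freeVars v := by
                  have := fresh_not_mem (allVars b ∪ freeVars v ∪ {x})
                  simp only [Finset.mem_union, not_or] at this
                  exact this.1.2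
                intro w hw
                simp only [freeVars, Finset.mem_sdiff, Finset.mem_singleton] at hw
                have h1 := ih (rename y f b) (by rw [size_rename]; omega) hw.1
                simp only [Finset.mem_union, Finset.mem_sdiff, Finset.mem_singleton] at h1
                simp only [freeVars, Finset.mem_union, Finset.mem_sdiff,
                  Finset.mem_singleton]
                rcases h1 with ⟨h1, hx⟩ | h1
                · have h2 := fv_rename y f b h1
                  simp only [Finset.mem_union, Finset.mem_sdiff, Finset.mem_singleton] at h2
                  rcases h2 with ⟨h2, hy⟩ | h2
                  · exact Or.inl ⟨⟨h2, hy⟩, hx⟩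
                  · exact absurd h2 hw.2
                · exact Or.inr h1
            · next hc =>
                intro w hw
                simp only [freeVars, Finset.mem_sdiff, Finset.mem_singleton] at hw
                have h1 := ih b (by omega) hw.1
                simp only [Finset.mem_union, Finset.mem_sdiff, Finset.mem_singleton] at h1
                simp only [freeVars, Finset.mem_union, Finset.mem_sdiff,
                  Finset.mem_singleton]
                tauto
    | lamBang y b =>
        simp only [size] at ht
        simp only [subst]
        split
        · next h =>
            subst h
            intro w hw
            simp only [freeVars, Finset.mem_sdiff, Finset.mem_singleton] at hw ⊢
            simp only [Finset.mem_union, Finset.mem_sdiff, Finset.mem_singleton]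
            exact Or.inl ⟨⟨hw.1, hw.2⟩, hw.2⟩
        · next hyx =>
            split
            · next hc =>
                set f := fresh (allVars b ∪ freeVars v ∪ {x}) with hf
                have hfv : f ∉ freeVars v := by
                  have := fresh_not_mem (allVars b ∪ freeVars v ∪ {x})
                  simp only [Finset.mem_union, not_or] at this
                  exact this.1.2
                intro w hw
                simp only [freeVars, Finset.mem_sdiff, Finset.mem_singleton] at hw
                have h1 := ih (rename y f b) (by rw [size_rename]; omega) hw.1
                simp only [Finset.mem_union, Finset.mem_sdiff, Finset.mem_singleton] at h1
                simp only [freeVars, Finset.mem_union, Finset.mem_sdiff,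
                  Finset.mem_singleton]
                rcases h1 with ⟨h1, hx⟩ | h1
                · have h2 := fv_rename y f b h1
                  simp only [Finset.mem_union, Finset.mem_sdiff, Finset.mem_singleton] at h2
                  rcases h2 with ⟨h2, hy⟩ | h2
                  · exact Or.inl ⟨⟨h2, hy⟩, hx⟩
                  · exact absurd h2 hw.2
                · exact Or.inr h1
            · next hc =>
                intro w hw
                simp only [freeVars, Finset.mem_sdiff, Finset.mem_singleton] at hw
                have h1 := ih b (by omega) hw.1
                simp only [Finset.mem_union, Finset.mem_sdiff, Finset.mem_singleton] at h1
                simp only [freeVars, Finset.mem_union, Finset.mem_sdiff,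
                  Finset.mem_singleton]
                tauto

theorem nbv_of_not_free (w : ℕ) : ∀ t, w ∉ freeVars t → nbv w t := by
  intro t
  induction t with
  | var x => intro _; trivial
  | lam x b ih =>
      intro h
      simp only [freeVars, Finset.mem_sdiff, Finset.mem_singleton, not_and, not_not] at h
      simp only [nbv]
      by_cases hx : x = w
      · exact Or.inl hx
      · exact Or.inr (ih fun hw => hx ((h hw)).symm)
  | app a b iha ihb =>
      intro h
      simp only [freeVars, Finset.mem_union, not_or] at h
      exact ⟨iha h.1, ihb h.2⟩
  | const c => intro _; trivial
  | bang t _ => intro h; exact h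
  | lamBang x b ih =>
      intro h
      simp only [freeVars, Finset.mem_sdiff, Finset.mem_singleton, not_and, not_not] at h
      simp only [nbv]
      by_cases hx : x = w
      · exact Or.inl hx
      · exact Or.inr (ih fun hw => hx ((h hw)).symm)

theorem nbv_rename (y z w : ℕ) (hz : w ≠ z) : ∀ t, nbv w t → nbv w (rename y z t) := by
  intro t
  induction t with
  | var x => intro _; simp only [rename]; split <;> trivial
  | lam x b ih =>
      intro h
      simp only [nbv] at h
      simp only [rename]
      split
      · exact h
      · simp only [nbv]
        rcases h with h | h
        · exact Or.inl h
        · exact Or.inr (ih h)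
  | app a b iha ihb =>
      intro h
      exact ⟨iha h.1, ihb h.2⟩
  | const c => intro _; trivial
  | bang t _ =>
      intro h
      simp only [nbv] at h
      simp only [rename, nbv]
      intro hw
      have := fv_rename y z t hw
      simp only [Finset.mem_union, Finset.mem_sdiff, Finset.mem_singleton] at this
      rcases this with ⟨h1, _⟩ | h1
      · exact h h1
      · exact hz h1
  | lamBang x b ih =>
      intro h
      simp only [nbv] at h
      simp only [rename]
      split
      · exact h
      · simp only [nbv]
        rcases h with h | h
        · exact Or.inl h
        · exact Or.inr (ih h)

theorem nbv_rename_fresh (y z : ℕ) :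
    ∀ t, nbv y t → z ∉ allVars t → nbv z (rename y z t) := by
  intro t
  induction t with
  | var x => intro _ _; simp only [rename]; split <;> trivial
  | lam x b ih =>
      intro h hz
      simp only [allVars, Finset.mem_insert, not_or] at hz
      simp only [nbv] at h
      simp only [rename]
      split
      · next hxy =>
          subst hxy
          simp only [nbv]
          exact Or.inr (nbv_of_not_free z b fun hc => hz.2 (fv_subset_allVars b hc))
      · next hxy =>
          simp only [nbv]
          rcases h with h | h
          · exact absurd h hxy
          · exact Or.inr (ih h hz.2)
  | app a b iha ihb =>
      intro h hz
      simp only [allVars, Finset.mem_union, not_or] at hz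
      exact ⟨iha h.1 hz.1, ihb h.2 hz.2⟩
  | const c => intro _ _; trivial
  | bang t _ =>
      intro h hz
      simp only [nbv] at h
      simp only [allVars] at hz
      simp only [rename, nbv]
      rw [rename_notfree y z t h]
      exact fun hc => hz (fv_subset_allVars t hc)
  | lamBang x b ih =>
      intro h hz
      simp only [allVars, Finset.mem_insert, not_or] at hz
      simp only [nbv] at h
      simp only [rename]
      split
      · next hxy =>
          subst hxy
          simp only [nbv]
          exact Or.inr (nbv_of_not_free z b fun hc => hz.2 (fv_subset_allVars b hc))
      · next hxy =>
          simp only [nbv]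
          rcases h with h | h
          · exact absurd h hxy
          · exact Or.inr (ih h hz.2)

theorem NL_rename (y z : ℕ) : ∀ t, NL t → z ∉ allVars t → NL (rename y z t) := by
  intro t
  induction t with
  | var x => intro _ _; simp only [rename]; split <;> trivial
  | lam x b ih =>
      intro h hz
      simp only [allVars, Finset.mem_insert, not_or] at hz
      simp only [NL] at h
      simp only [rename]
      split
      · exact h
      · simp only [NL]
        exact ⟨ih h.1 hz.2, nbv_rename y z x (fun hc => hz.1 hc.symm) b h.2⟩
  | app a b iha ihb =>
      intro h hz
      simp only [allVars, Finset.mem_union, not_or] at hz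
      exact ⟨iha h.1 hz.1, ihb h.2 hz.2⟩
  | const c => intro _ _; trivial
  | bang t ih =>
      intro h hz
      simp only [NL] at h
      simp only [rename, NL]
      exact ih h hz
  | lamBang x b ih =>
      intro h hz
      simp only [allVars, Finset.mem_insert, not_or] at hz
      simp only [NL] at h
      simp only [rename]
      split
      · exact h
      · simp only [NL]
        exact ih h hz.2

theorem nbv_subst (v : Term) (x w : ℕ) (hw : w ∉ freeVars v) :
    ∀ n t, size t ≤ n → nbv w t → nbv w (subst v x t) := by
  intro n
  induction n with
  | zero => intro t ht; cases t <;> simp [size] at ht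
  | succ n ih =>
    intro t ht h
    cases t with
    | var y =>
        simp only [subst]
        split
        · exact nbv_of_not_free w v hw
        · trivial
    | const c => simp only [subst]; trivial
    | app a b =>
        simp only [size] at ht
        simp only [nbv] at h ⊢
        simp only [subst, nbv]
        exact ⟨ih a (by omega) h.1, ih b (by omega) h.2⟩
    | bang b =>
        simp only [size] at ht
        simp only [nbv] at h
        simp only [subst, nbv]
        intro hc
        have := fv_subst v x (size b) b le_rfl hc
        simp only [Finset.mem_union, Finset.mem_sdiff, Finset.mem_singleton] at this
        rcases this with ⟨h1, _⟩ | h1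
        · exact h h1
        · exact hw h1
    | lam y b =>
        simp only [size] at ht
        simp only [nbv] at h
        simp only [subst]
        split
        · next hyx => simp only [nbv]; exact h
        · next hyx =>
            split
            · next hc =>
                set f := fresh (allVars b ∪ freeVars v ∪ {x}) with hf
                have hfresh := fresh_not_mem (allVars b ∪ freeVars v ∪ {x})
                simp only [Finset.mem_union, not_or, Finset.mem_singleton] at hfresh
                simp only [nbv]
                by_cases hwf : f = w
                · exact Or.inl hwf
                · refine Or.inr (ih (rename y f b) (by rw [size_rename]; omega) ?_)
                  by_cases hwy : w = y
                  · subst hwy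
                    refine nbv_of_not_free w _ fun hmem => ?_
                    have := fv_rename w f b hmem
                    simp only [Finset.mem_union, Finset.mem_sdiff,
                      Finset.mem_singleton] at this
                    rcases this with ⟨_, hne⟩ | heq
                    · exact hne trivial
                    · exact hwf heq.symm
                  · rcases h with h | h
                    · exact absurd h.symm hwy
                    · exact nbv_rename y f w (fun hc2 => hwf hc2.symm) b h
            · next hc =>
                simp only [nbv]
                rcases h with h | h
                · exact Or.inl h
                · exact Or.inr (ih b (by omega) h)
    | lamBang y b =>
        simp only [size] at ht
        simp only [nbv] at h
        simp only [subst]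
        split
        · next hyx => simp only [nbv]; exact h
        · next hyx =>
            split
            · next hc =>
                set f := fresh (allVars b ∪ freeVars v ∪ {x}) with hf
                have hfresh := fresh_not_mem (allVars b ∪ freeVars v ∪ {x})
                simp only [Finset.mem_union, not_or, Finset.mem_singleton] at hfresh
                simp only [nbv]
                by_cases hwf : f = w
                · exact Or.inl hwf
                · refine Or.inr (ih (rename y f b) (by rw [size_rename]; omega) ?_)
                  by_cases hwy : w = y
                  · subst hwy
                    refine nbv_of_not_free w _ fun hmem => ?_
                    have := fv_rename w f b hmem
                    simp only [Finset.mem_union, Finset.mem_sdiff,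
                      Finset.mem_singleton] at this
                    rcases this with ⟨_, hne⟩ | heq
                    · exact hne trivial
                    · exact hwf heq.symm
                  · rcases h with h | h
                    · exact absurd h.symm hwy
                    · exact nbv_rename y f w (fun hc2 => hwf hc2.symm) b h
            · next hc =>
                simp only [nbv]
                rcases h with h | h
                · exact Or.inl h
                · exact Or.inr (ih b (by omega) h)

theorem NL_subst (v : Term) (x : ℕ) (hv : NL v) :
    ∀ n t, size t ≤ n → NL t → NL (subst v x t) := by
  intro n
  induction n with
  | zero => intro t ht; cases t <;> simp [size] at ht
  | succ n ih =>
    intro t ht h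
    cases t with
    | var y => simp only [subst]; split <;> [exact hv; trivial]
    | const c => simp only [subst]; trivial
    | app a b =>
        simp only [size] at ht
        simp only [NL] at h
        simp only [subst, NL]
        exact ⟨ih a (by omega) h.1, ih b (by omega) h.2⟩
    | bang b =>
        simp only [size] at ht
        simp only [NL] at h
        simp only [subst, NL]
        exact ih b (by omega) h
    | lam y b =>
        simp only [size] at ht
        simp only [NL] at h
        simp only [subst]
        split
        · next hyx => simp only [NL]; exact h
        · next hyx =>
            split
            · next hc =>
                set f := fresh (allVars b ∪ freeVars v ∪ {x}) with hf
                have hfresh := fresh_not_mem (allVars b ∪ freeVars v ∪ {x})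
                simp only [Finset.mem_union, not_or, Finset.mem_singleton] at hfresh
                simp only [NL]
                constructor
                · exact ih (rename y f b) (by rw [size_rename]; omega)
                    (NL_rename y f b h.1 hfresh.1.1)
                · exact nbv_subst v x f hfresh.1.2 (size (rename y f b)) _ le_rfl
                    (nbv_rename_fresh y f b h.2 hfresh.1.1)
            · next hc =>
                simp only [NL]
                refine ⟨ih b (by omega) h.1, ?_⟩
                by_cases hxb : x ∈ freeVars b
                · have hyv : y ∉ freeVars v := fun hyv => hc ⟨hyv, hxb⟩
                  exact nbv_subst v x y hyv (size b) b le_rfl h.2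
                · rw [subst_notfree v x b hxb]; exact h.2
    | lamBang y b =>
        simp only [size] at ht
        simp only [NL] at h
        simp only [subst]
        split
        · next hyx => simp only [NL]; exact h
        · next hyx =>
            split
            · next hc =>
                set f := fresh (allVars b ∪ freeVars v ∪ {x}) with hf
                have hfresh := fresh_not_mem (allVars b ∪ freeVars v ∪ {x})
                simp only [Finset.mem_union, not_or, Finset.mem_singleton] at hfresh
                simp only [NL]
                exact ih (rename y f b) (by rw [size_rename]; omega)
                  (NL_rename y f b h hfresh.1.1)
            · next hc =>
                simp only [NL]
                exact ih b (by omega) h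

theorem Ag.rename (y z : ℕ) {t t'} (h : Ag t t') : Ag (rename y z t) (rename y z t') := by
  induction h with
  | bit h1 h2 => exact .bit h1 h2
  | var x => simp only [LambdaQ.rename]; split <;> exact Ag.refl _
  | const c => exact .const c
  | lam x hbb ih =>
      simp only [LambdaQ.rename]
      split
      · exact .lam x hbb
      · exact .lam x ih
  | lamBang x hbb ih =>
      simp only [LambdaQ.rename]
      split
      · exact .lamBang x hbb
      · exact .lamBang x ih
  | app _ _ ih1 ih2 => exact .app ih1 ih2
  | bang t => exact .bang _

theorem Ag_subst (x : ℕ) :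
    ∀ n E E' v v', size E ≤ n → Ag E E' → Ag v v' → (nbv x E ∨ v = v') →
      Ag (subst v x E) (subst v' x E') := by
  intro n
  induction n with
  | zero => intro E E' v v' hs; cases E <;> simp [size] at hs
  | succ n ih =>
    intro E E' v v' hs hE hv hside
    cases hE with
    | bit h1 h2 => simp only [subst]; exact .bit h1 h2
    | var y =>
        by_cases hyx : y = x
        · simpa only [subst, if_pos hyx] using hv
        · simp only [subst, if_neg hyx]; exact .var y
    | const c => simp only [subst]; exact .const c
    | app ha hb =>
        simp only [size] at hs
        simp only [nbv] at hside
        simp only [subst]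
        exact .app (ih _ _ _ _ (by omega) ha hv (by tauto))
          (ih _ _ _ _ (by omega) hb hv (by tauto))
    | bang B =>
        rcases hside with hside | rfl
        · simp only [nbv] at hside
          simp only [subst]
          rw [subst_notfree v x B hside, subst_notfree v' x B hside]
          exact .bang B
        · exact Ag.refl _
    | @lam b b' y hbb =>
        simp only [size] at hs
        simp only [nbv] at hside
        by_cases hyx : y = x
        · simp only [subst, if_pos hyx]
          exact .lam y hbb
        · have hfvb : freeVars b = freeVars b' := hbb.fv
          have hfvv : freeVars v = freeVars v' := hv.fv
          have hsets : allVars b ∪ freeVars v ∪ {x} = allVars b' ∪ freeVars v' ∪ {x} := by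
            rw [hbb.av, hfvv]
          by_cases hc : y ∈ freeVars v ∧ x ∈ freeVars b
          · have hc' : y ∈ freeVars v' ∧ x ∈ freeVars b' := by
              rw [← hfvb, ← hfvv]; exact hc
            simp only [subst, if_neg hyx, if_pos hc, if_pos hc', ← hsets]
            set f := fresh (allVars b ∪ freeVars v ∪ {x}) with hf
            have hfresh := fresh_not_mem (allVars b ∪ freeVars v ∪ {x})
            simp only [Finset.mem_union, not_or, Finset.mem_singleton] at hfresh
            refine .lam f (ih _ _ _ _ (by rw [size_rename]; omega)
              (hbb.rename y f) hv ?_)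
            rcases hside with hside | rfl
            · rcases hside with hside | hside
              · exact absurd hside hyx
              · exact Or.inl (nbv_rename y f x (fun h2 => hfresh.2 h2.symm) b hside)
            · exact Or.inr rfl
          · have hc' : ¬(y ∈ freeVars v' ∧ x ∈ freeVars b') := by
              rw [← hfvb, ← hfvv]; exact hc
            simp only [subst, if_neg hyx, if_neg hc, if_neg hc']
            refine .lam y (ih _ _ _ _ (by omega) hbb hv ?_)
            rcases hside with hside | rfl
            · rcases hside with hside | hside
              · exact absurd hside hyx
              · exact Or.inl hside
            · exact Or.inr rfl
    | @lamBang b b' y hbb =>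
        simp only [size] at hs
        simp only [nbv] at hside
        by_cases hyx : y = x
        · simp only [subst, if_pos hyx]
          exact .lamBang y hbb
        · have hfvb : freeVars b = freeVars b' := hbb.fv
          have hfvv : freeVars v = freeVars v' := hv.fv
          have hsets : allVars b ∪ freeVars v ∪ {x} = allVars b' ∪ freeVars v' ∪ {x} := by
            rw [hbb.av, hfvv]
          by_cases hc : y ∈ freeVars v ∧ x ∈ freeVars b
          · have hc' : y ∈ freeVars v' ∧ x ∈ freeVars b' := by
              rw [← hfvb, ← hfvv]; exact hc
            simp only [subst, if_neg hyx, if_pos hc, if_pos hc', ← hsets]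
            set f := fresh (allVars b ∪ freeVars v ∪ {x}) with hf
            have hfresh := fresh_not_mem (allVars b ∪ freeVars v ∪ {x})
            simp only [Finset.mem_union, not_or, Finset.mem_singleton] at hfresh
            refine .lamBang f (ih _ _ _ _ (by rw [size_rename]; omega)
              (hbb.rename y f) hv ?_)
            rcases hside with hside | rfl
            · rcases hside with hside | hside
              · exact absurd hside hyx
              · exact Or.inl (nbv_rename y f x (fun h2 => hfresh.2 h2.symm) b hside)
            · exact Or.inr rfl
          · have hc' : ¬(y ∈ freeVars v' ∧ x ∈ freeVars b') := by
              rw [← hfvb, ← hfvv]; exact hc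
            simp only [subst, if_neg hyx, if_neg hc, if_neg hc']
            refine .lamBang y (ih _ _ _ _ (by omega) hbb hv ?_)
            rcases hside with hside | rfl
            · rcases hside with hside | hside
              · exact absurd hside hyx
              · exact Or.inl hside
            · exact Or.inr rfl

theorem WF_fv {L N t} (h : WF L N t) : freeVars t ⊆ L ∪ N := by
  induction h with
  | const c => simp [freeVars]
  | id x => simp [freeVars]
  | promotion _ ih => exact ih
  | dereliction _ _ _ ih =>
      intro w hw
      have := ih hw
      simp only [Finset.mem_union, Finset.mem_insert] at this ⊢
      tauto
  | @contraction L N t x y z _ _ _ _ _ _ _ _ ih =>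
      intro w hw
      have h1 := fv_subst (Term.var z) y (size _) _ le_rfl hw
      simp only [Finset.mem_union, Finset.mem_sdiff, Finset.mem_singleton,
        freeVars] at h1
      rcases h1 with ⟨h1, _⟩ | h1
      · have h2 := fv_subst (Term.var z) x (size t) t le_rfl h1
        simp only [Finset.mem_union, Finset.mem_sdiff, Finset.mem_singleton,
          freeVars] at h2
        rcases h2 with ⟨h2, hne⟩ | h2
        · have := ih h2
          simp only [Finset.mem_union, Finset.mem_insert] at this ⊢
          rcases h1 with h1
          tauto
        · simp [h2]
      · simp [h1]
  | weakening _ _ _ ih =>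
      intro w hw
      have := ih hw
      simp only [Finset.mem_union, Finset.mem_insert] at this ⊢
      tauto
  | lamI _ _ _ ih =>
      intro w hw
      simp only [freeVars, Finset.mem_sdiff, Finset.mem_singleton] at hw
      have := ih hw.1
      simp only [Finset.mem_union, Finset.mem_insert] at this ⊢
      rcases this with (h | h) | h
      · exact absurd h hw.2
      · tauto
      · tauto
  | lamBangI _ _ _ ih =>
      intro w hw
      simp only [freeVars, Finset.mem_sdiff, Finset.mem_singleton] at hw
      have := ih hw.1
      simp only [Finset.mem_union, Finset.mem_insert] at this ⊢
      rcases this with h | (h | h)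
      · tauto
      · exact absurd h hw.2
      · tauto
  | appE _ _ _ ih1 ih2 =>
      intro w hw
      simp only [freeVars, Finset.mem_union] at hw ⊢
      rcases hw with hw | hw
      · have := ih1 hw; simp only [Finset.mem_union] at this; tauto
      · have := ih2 hw; simp only [Finset.mem_union] at this; tauto

theorem WF_NL {L N t} (h : WF L N t) : NL t ∧ ∀ w ∈ L, nbv w t := by
  induction h with
  | const c => exact ⟨trivial, by simp⟩
  | id x => exact ⟨trivial, by simp [nbv]⟩
  | promotion hwf ih =>
      refine ⟨ih.1, by simp⟩
  | dereliction _ _ _ ih =>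
      exact ⟨ih.1, fun w hw => ih.2 w (Finset.mem_insert_of_mem hw)⟩
  | @contraction L N t x y z hxy hxL hxN hyL hyN hzL hzN _ ih =>
      constructor
      · exact NL_subst (Term.var z) y trivial (size _) _ le_rfl
          (NL_subst (Term.var z) x trivial (size t) t le_rfl ih.1)
      · intro w hw
        have hwz : w ≠ z := fun hc => hzL (hc ▸ hw)
        have hwfv : w ∉ freeVars (Term.var z) := by
          simp only [freeVars, Finset.mem_singleton]; exact hwz
        exact nbv_subst (Term.var z) y w hwfv (size _) _ le_rfl
          (nbv_subst (Term.var z) x w hwfv (size t) t le_rfl (ih.2 w hw))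
  | weakening _ _ _ ih => exact ih
  | @lamI L N t x hxL hxN _ ih =>
      refine ⟨⟨ih.1, ih.2 x (Finset.mem_insert_self x L)⟩, fun w hw => ?_⟩
      simp only [nbv]
      exact Or.inr (ih.2 w (Finset.mem_insert_of_mem hw))
  | @lamBangI L N t x hxL hxN _ ih =>
      refine ⟨ih.1, fun w hw => ?_⟩
      simp only [nbv]
      exact Or.inr (ih.2 w hw)
  | @appE L₁ N₁ L₂ N₂ t₁ t₂ hdisj h1 h2 ih1 ih2 =>
      constructor
      · exact ⟨ih1.1, ih2.1⟩
      · intro w hw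
        simp only [Finset.mem_union] at hw
        simp only [nbv]
        rcases hw with hw | hw
        · refine ⟨ih1.2 w hw, nbv_of_not_free w t₂ fun hc => ?_⟩
          have h3 := WF_fv h2 hc
          have h4 : w ∉ L₂ ∪ N₂ :=
            Finset.disjoint_left.mp hdisj (Finset.mem_union_left _ hw)
          exact h4 h3
        · refine ⟨nbv_of_not_free w t₁ fun hc => ?_, ih2.2 w hw⟩
          have h3 := WF_fv h1 hc
          have h4 : w ∉ L₁ ∪ N₁ :=
            Finset.disjoint_right.mp hdisj (Finset.mem_union_left _ hw)
          exact h4 h3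

theorem substep_app {t h s} (hs : SubStep t h s) : ∃ a b, t = Term.app a b := by
  cases hs <;> exact ⟨_, _, rfl⟩

theorem value_no_substep {t} (hv : IsValue t) {h s} (hs : SubStep t h s) : False := by
  obtain ⟨a, b, rfl⟩ := substep_app hs
  simp [IsValue] at hv

theorem Ag.value {a b} (h : Ag a b) (hv : IsValue a) : IsValue b := by
  cases h <;> simp [IsValue] at hv ⊢

theorem gateapp_shape {g φ s} (h : GateApp g φ s) :
    (∃ b, φ = bit b) ∨ ∃ a b, φ = mkPair (bit a) (bit b) := by
  cases h with
  | gCnot a b => exact Or.inr ⟨a, b, rfl⟩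
  | _ => exact Or.inl ⟨_, rfl⟩

theorem gateapp_not_app {g φ s} (h : GateApp g φ s) (a b : Term) : φ ≠ Term.app a b := by
  rcases gateapp_shape h with ⟨c, rfl⟩ | ⟨c, d, rfl⟩
  · cases c <;> simp [bit]
  · simp [mkPair, pairV]

theorem gateapp_gate {g φ s} (h : GateApp g φ s) :
    ¬(g = Const.zero ∨ g = Const.one) := by
  cases h <;> simp

theorem mem_single_support {α : Type*} {u a : α} {c : ℂ} (h : u ∈ (Finsupp.single a c).support) :
    u = a := Finset.mem_singleton.mp (Finsupp.support_single_subset h)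

theorem mem_smul_single_support {α : Type*} {u a : α} {c d : ℂ}
    (h : u ∈ (d • Finsupp.single a c).support) : u = a :=
  mem_single_support (Finsupp.support_smul h)

theorem hadOut_mem {b : Bool} {u : Term} (h : u ∈ (hadOut b).support) :
    u = bit false ∨ u = bit true := by
  cases b with
  | false =>
      simp only [hadOut] at h
      have h2 := Finsupp.support_smul h
      have h3 := Finsupp.support_add h2
      rcases Finset.mem_union.mp h3 with h4 | h4
      · exact Or.inl (mem_single_support h4)
      · exact Or.inr (mem_single_support h4)
  | true =>
      simp only [hadOut] at h
      have h2 := Finsupp.support_smul h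
      have h3 := Finsupp.support_sub h2
      rcases Finset.mem_union.mp h3 with h4 | h4
      · exact Or.inl (mem_single_support h4)
      · exact Or.inr (mem_single_support h4)

theorem NL_bit (b : Bool) : NL (bit b) := by cases b <;> trivial

theorem NL_mkPair (a b : Bool) : NL (mkPair (bit a) (bit b)) := by
  cases a <;> cases b <;>
    simp [mkPair, pairV, nilT, idT, bit, NL, nbv, freeVars]

theorem Ag_bit (a a' : Bool) : Ag (bit a) (bit a') := by
  cases a <;> cases a' <;> exact Ag.bit (by simp [bit]) (by simp [bit])

theorem Ag_mkPair (a b a' b' : Bool) :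
    Ag (mkPair (bit a) (bit b)) (mkPair (bit a') (bit b')) := by
  simp only [mkPair, pairV]
  exact .lamBang _ (.lamBang _ (.app (.app (.var _) (Ag_bit a a'))
    (.lamBang _ (.lamBang _ (.app (.app (.var _) (Ag_bit b b')) (Ag.refl _))))))

theorem Ag_bit_inv {b : Bool} {u : Term} (h : Ag (bit b) u) : ∃ b', u = bit b' := by
  cases b <;> simp only [bit] at h <;> cases h with
  | bit _ h2 => rcases h2 with rfl | rfl
                exacts [⟨false, rfl⟩, ⟨true, rfl⟩]
  | const _ => first | exact ⟨false, rfl⟩ | exact ⟨true, rfl⟩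

theorem Ag_nilT_inv {u : Term} (h : Ag nilT u) : u = nilT := by
  simp only [nilT, idT] at h
  cases h with | lamBang _ h =>
  cases h with | lamBang _ h =>
  cases h with | app h1 h2 =>
  cases h1
  cases h2 with | lam _ h3 =>
  cases h3
  rfl

theorem Ag_mkPair_inv {a b : Bool} {u : Term}
    (h : Ag (mkPair (bit a) (bit b)) u) : ∃ a' b', u = mkPair (bit a') (bit b') := by
  simp only [mkPair, pairV] at h
  cases h with | lamBang _ h =>
  cases h with | lamBang _ h =>
  cases h with | app h1 h2 =>
  cases h1 with | app h3 h4 =>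
  cases h3
  obtain ⟨a', rfl⟩ := Ag_bit_inv h4
  cases h2 with | lamBang _ h =>
  cases h with | lamBang _ h =>
  cases h with | app h1 h2 =>
  cases h1 with | app h3 h4 =>
  cases h3
  obtain ⟨b', rfl⟩ := Ag_bit_inv h4
  rw [Ag_nilT_inv h2]
  exact ⟨a', b', rfl⟩

theorem gateapp_exists {g φ s} (h : GateApp g φ s) {φ'} (hA : Ag φ φ') :
    ∃ s', GateApp g φ' s' := by
  cases h with
  | had b => obtain ⟨b', rfl⟩ := Ag_bit_inv hA; exact ⟨_, .had b'⟩
  | gX b => obtain ⟨b', rfl⟩ := Ag_bit_inv hA; exact ⟨_, .gX b'⟩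
  | gY b => obtain ⟨b', rfl⟩ := Ag_bit_inv hA; exact ⟨_, .gY b'⟩
  | gZ b => obtain ⟨b', rfl⟩ := Ag_bit_inv hA; exact ⟨_, .gZ b'⟩
  | gS b => obtain ⟨b', rfl⟩ := Ag_bit_inv hA; exact ⟨_, .gS b'⟩
  | gR b => obtain ⟨b', rfl⟩ := Ag_bit_inv hA; exact ⟨_, .gR b'⟩
  | gCnot a b =>
      obtain ⟨a', b', rfl⟩ := Ag_mkPair_inv hA; exact ⟨_, .gCnot a' b'⟩

theorem substep_exists {t h s} (hs : SubStep t h s) :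
    ∀ {t'}, Ag t t' → ∃ h' s', SubStep t' h' s' := by
  induction hs with
  | app1 t₂ hs ih =>
      intro t' hA
      cases hA with | app ha hb =>
      obtain ⟨h', s', hs'⟩ := ih ha
      exact ⟨_, _, .app1 _ hs'⟩
  | app2 hv hs ih =>
      intro t' hA
      cases hA with | app ha hb =>
      obtain ⟨h', s', hs'⟩ := ih hb
      exact ⟨_, _, .app2 (ha.value hv) hs'⟩
  | beta hv =>
      intro t' hA
      cases hA with | app ha hb =>
      cases ha with | lam x hE =>
      exact ⟨_, _, .beta (hb.value hv)⟩
  | bangBeta1 hx =>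
      intro t' hA
      cases hA with | app ha hb =>
      cases ha with | lamBang x hE =>
      cases hb with | bang w =>
      exact ⟨_, _, .bangBeta1 (hE.fv ▸ hx)⟩
  | bangBeta2 hx =>
      intro t' hA
      cases hA with | app ha hb =>
      cases ha with | lamBang x hE =>
      cases hb with | bang w =>
      exact ⟨_, _, .bangBeta2 (hE.fv ▸ hx)⟩
  | gate hg =>
      intro t' hA
      cases hA with | app ha hb =>
      cases ha with
      | bit h1 _ => exact absurd h1 (gateapp_gate hg)
      | const _ =>
          obtain ⟨s', hs'⟩ := gateapp_exists hg hb
          exact ⟨_, _, .gate hs'⟩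

theorem NL_substep {t h s} (hs : SubStep t h s) (hNL : NL t) :
    ∀ u ∈ s.support, NL u := by
  induction hs with
  | app1 t₂ hs ih =>
      intro u hu
      simp only [NL] at hNL
      obtain ⟨u₀, hu₀, rfl⟩ := Finset.mem_image.mp (Finsupp.mapDomain_support hu)
      exact ⟨ih hNL.1 u₀ hu₀, hNL.2⟩
  | app2 hv hs ih =>
      intro u hu
      simp only [NL] at hNL
      obtain ⟨u₀, hu₀, rfl⟩ := Finset.mem_image.mp (Finsupp.mapDomain_support hu)
      exact ⟨hNL.1, ih hNL.2 u₀ hu₀⟩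
  | beta hv =>
      intro u hu
      simp only [NL] at hNL
      rw [mem_single_support hu]
      exact NL_subst _ _ hNL.2 _ _ le_rfl hNL.1.1
  | bangBeta1 hx =>
      intro u hu
      simp only [NL] at hNL
      rw [mem_single_support hu]
      exact NL_subst _ _ hNL.2 _ _ le_rfl hNL.1
  | bangBeta2 hx =>
      intro u hu
      simp only [NL] at hNL
      rw [mem_single_support hu]
      exact hNL.1
  | gate hg =>
      intro u hu
      cases hg with
      | had b => rcases hadOut_mem hu with rfl | rfl <;> exact NL_bit _
      | gX b => rw [mem_single_support hu]; exact NL_bit _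
      | gY b => rw [mem_smul_single_support hu]; exact NL_bit _
      | gZ b => rw [mem_smul_single_support hu]; exact NL_bit _
      | gS b => rw [mem_smul_single_support hu]; exact NL_bit _
      | gR b => rw [mem_smul_single_support hu]; exact NL_bit _
      | gCnot a b => rw [mem_single_support hu]; exact NL_mkPair _ _

theorem substep_Ag {t h s} (hs : SubStep t h s) :
    ∀ {t' h' s'}, Ag t t' → NL t → SubStep t' h' s' →
      ∀ u ∈ s.support, ∀ u' ∈ s'.support, Ag u u' := by
  induction hs with
  | @app1 t₁ hh ss t₂ hs1 ih =>
      intro t' h' s' hA hN hs2 u hu u' hu'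
      cases hA with | app ha hb =>
      obtain ⟨p, q, rfl⟩ := substep_app hs1
      cases hs2 with
      | app1 _ hs2' =>
          obtain ⟨u₀, hu₀, rfl⟩ := Finset.mem_image.mp (Finsupp.mapDomain_support hu)
          obtain ⟨u₀', hu₀', rfl⟩ := Finset.mem_image.mp (Finsupp.mapDomain_support hu')
          simp only [NL] at hN
          exact .app (ih ha hN.1 hs2' u₀ hu₀ u₀' hu₀') hb
      | app2 hv' _ => cases ha; simp [IsValue] at hv'
      | beta hv' => cases ha
      | bangBeta1 _ => cases ha
      | bangBeta2 _ => cases ha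
      | gate hg => cases ha
  | @app2 v t₂ hh ss hv hs1 ih =>
      intro t' h' s' hA hN hs2 u hu u' hu'
      cases hA with | app ha hb =>
      obtain ⟨p, q, rfl⟩ := substep_app hs1
      cases hs2 with
      | app1 _ hs2' => exact absurd hs2' (fun hc => value_no_substep (ha.value hv) hc)
      | app2 hv' hs2' =>
          obtain ⟨u₀, hu₀, rfl⟩ := Finset.mem_image.mp (Finsupp.mapDomain_support hu)
          obtain ⟨u₀', hu₀', rfl⟩ := Finset.mem_image.mp (Finsupp.mapDomain_support hu')
          simp only [NL] at hN
          exact .app ha (ih hb hN.2 hs2' u₀ hu₀ u₀' hu₀')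
      | beta hv2 => cases hb; simp [IsValue] at hv2
      | bangBeta1 _ => cases hb
      | bangBeta2 _ => cases hb
      | gate hg => cases hb; exact absurd rfl (gateapp_not_app hg _ _)
  | @beta x E v hv =>
      intro t' h' s' hA hN hs2 u hu u' hu'
      cases hA with | app ha hb =>
      cases ha with | lam _ hE =>
      cases hs2 with
      | app1 _ hs2' => obtain ⟨_, _, hc⟩ := substep_app hs2'; cases hc
      | app2 hv2 hs2' => exact absurd hs2' (fun hc => value_no_substep (hb.value hv) hc)
      | beta hv2 =>
          rw [mem_single_support hu, mem_single_support hu']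
          simp only [NL] at hN
          exact Ag_subst x _ _ _ _ _ le_rfl hE hb (Or.inl hN.1.2)
  | @bangBeta1 x E w hx =>
      intro t' h' s' hA hN hs2 u hu u' hu'
      cases hA with | app ha hb =>
      cases ha with | lamBang _ hE =>
      cases hb with | bang _ =>
      cases hs2 with
      | app1 _ hs2' => obtain ⟨_, _, hc⟩ := substep_app hs2'; cases hc
      | app2 _ hs2' => obtain ⟨_, _, hc⟩ := substep_app hs2'; cases hc
      | bangBeta1 _ =>
          rw [mem_single_support hu, mem_single_support hu']
          exact Ag_subst x _ _ _ _ _ le_rfl hE (Ag.refl w) (Or.inr rfl)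
      | bangBeta2 hx' => exact absurd (hE.fv ▸ hx) hx'
  | @bangBeta2 x E w hx =>
      intro t' h' s' hA hN hs2 u hu u' hu'
      cases hA with | app ha hb =>
      cases ha with | lamBang _ hE =>
      cases hb with | bang _ =>
      cases hs2 with
      | app1 _ hs2' => obtain ⟨_, _, hc⟩ := substep_app hs2'; cases hc
      | app2 _ hs2' => obtain ⟨_, _, hc⟩ := substep_app hs2'; cases hc
      | bangBeta1 hx' => exact absurd hx' (hE.fv ▸ hx)
      | bangBeta2 _ =>
          rw [mem_single_support hu, mem_single_support hu']
          exact hE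
  | @gate g φ ss hg =>
      intro t' h' s' hA hN hs2 u hu u' hu'
      cases hA with | app ha hb =>
      cases ha with
      | bit h1 _ => exact absurd h1 (gateapp_gate hg)
      | const _ =>
      cases hs2 with
      | app1 _ hs2' => obtain ⟨_, _, hc⟩ := substep_app hs2'; cases hc
      | app2 _ hs2' =>
          obtain ⟨p, q, rfl⟩ := substep_app hs2'
          rcases gateapp_shape hg with ⟨c, rfl⟩ | ⟨c, d, rfl⟩
          · cases c <;> simp only [bit] at hb <;> cases hb
          · simp only [mkPair, pairV] at hb; cases hb
      | gate hg2 =>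
          cases hg with
          | had b =>
              cases hg2 with | had b' =>
              rcases hadOut_mem hu with rfl | rfl <;> rcases hadOut_mem hu' with rfl | rfl <;>
                exact Ag_bit _ _
          | gX b =>
              cases hg2 with | gX b' =>
              rw [mem_single_support hu, mem_single_support hu']; exact Ag_bit _ _
          | gY b =>
              cases hg2 with | gY b' =>
              rw [mem_smul_single_support hu, mem_smul_single_support hu']; exact Ag_bit _ _
          | gZ b =>
              cases hg2 with | gZ b' =>
              rw [mem_smul_single_support hu, mem_smul_single_support hu']; exact Ag_bit _ _
          | gS b =>
              cases hg2 with | gS b' =>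
              rw [mem_smul_single_support hu, mem_smul_single_support hu']; exact Ag_bit _ _
          | gR b =>
              cases hg2 with | gR b' =>
              rw [mem_smul_single_support hu, mem_smul_single_support hu']; exact Ag_bit _ _
          | gCnot a b =>
              cases hg2 with | gCnot a' b' =>
              rw [mem_single_support hu, mem_single_support hu']; exact Ag_mkPair _ _ _ _

/-- The reachability invariant: every register in the support is `NL` and
registers are pairwise in agreement. -/
def Inv (ψ : QState) : Prop :=
  (∀ c ∈ ψ.support, NL c.2) ∧ ∀ c ∈ ψ.support, ∀ c' ∈ ψ.support, Ag c.2 c'.2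

theorem confstep_cases {c : Config} {Φ} (h : ConfStep c Φ) :
    (∃ hh s, SubStep c.2 hh s ∧ Φ = s.mapDomain fun u => (c.1 ++ [hh], u)) ∨
      ((∀ h s, ¬ SubStep c.2 h s) ∧ Φ = Finsupp.single (c.1 ++ [ph], c.2) 1) := by
  cases h with
  | sub hs => exact Or.inl ⟨_, _, hs, rfl⟩
  | idStep h => exact Or.inr ⟨h, rfl⟩

theorem Inv_step {ψ ψ'} (h : Inv ψ) (hs : StateStep ψ ψ') : Inv ψ' := by
  obtain ⟨F, hF, rfl⟩ := hs
  have hsup : ∀ c'' ∈ (ψ.sum fun c a => a • F c).support,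
      ∃ c ∈ ψ.support, c'' ∈ (F c).support := by
    intro c'' hc
    obtain ⟨c, hc1, hc2⟩ := Finset.mem_biUnion.mp (Finsupp.support_sum hc)
    exact ⟨c, hc1, Finsupp.support_smul hc2⟩
  constructor
  · intro c'' hc''
    obtain ⟨c, hc, hmem⟩ := hsup c'' hc''
    rcases confstep_cases (hF _ hc) with ⟨hh, sΦ, hstep, hEq⟩ | ⟨hstuck, hEq⟩
    · rw [hEq] at hmem
      obtain ⟨u, hu, rfl⟩ := Finset.mem_image.mp (Finsupp.mapDomain_support hmem)
      exact NL_substep hstep (h.1 _ hc) u hu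
    · rw [hEq] at hmem
      rw [mem_single_support hmem]
      exact h.1 c hc
  · intro c₁'' h1'' c₂'' h2''
    obtain ⟨c₁, hc₁, hmem₁⟩ := hsup c₁'' h1''
    obtain ⟨c₂, hc₂, hmem₂⟩ := hsup c₂'' h2''
    have hAg : Ag c₁.2 c₂.2 := h.2 _ hc₁ _ hc₂
    rcases confstep_cases (hF _ hc₁) with ⟨hh₁, s₁, hstep₁, hEq₁⟩ | ⟨hstuck₁, hEq₁⟩
    · rw [hEq₁] at hmem₁
      obtain ⟨u₁, hu₁, rfl⟩ := Finset.mem_image.mp (Finsupp.mapDomain_support hmem₁)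
      rcases confstep_cases (hF _ hc₂) with ⟨hh₂, s₂, hstep₂, hEq₂⟩ | ⟨hstuck₂, hEq₂⟩
      · rw [hEq₂] at hmem₂
        obtain ⟨u₂, hu₂, rfl⟩ := Finset.mem_image.mp (Finsupp.mapDomain_support hmem₂)
        exact substep_Ag hstep₁ hAg (h.1 _ hc₁) hstep₂ u₁ hu₁ u₂ hu₂
      · obtain ⟨h', s', hs'⟩ := substep_exists hstep₁ hAg
        exact absurd hs' (hstuck₂ h' s')
    · rw [hEq₁] at hmem₁
      rw [mem_single_support hmem₁]
      rcases confstep_cases (hF _ hc₂) with ⟨hh₂, s₂, hstep₂, hEq₂⟩ | ⟨hstuck₂, hEq₂⟩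
      · obtain ⟨h', s', hs'⟩ := substep_exists hstep₂ hAg.symm
        exact absurd hs' (hstuck₁ h' s')
      · rw [hEq₂] at hmem₂
        rw [mem_single_support hmem₂]
        exact hAg

theorem Inv_reach {ψ₀ ψ} (h0 : Inv ψ₀) (h : Relation.ReflTransGen StateStep ψ₀ ψ) :
    Inv ψ := by
  induction h with
  | refl => exact h0
  | tail _ hstep ih => exact Inv_step ih hstep

theorem Ag_subtermAt {a b} (h : Ag a b) :
    ∀ p s, subtermAt a p = some (Term.bang s) → subtermAt b p = some (Term.bang s) := by
  induction h with
  | @bit c c' _ _ =>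
      intro p s hp
      cases p with
      | nil => simp [subtermAt] at hp
      | cons i q => simp [subtermAt] at hp
  | var x =>
      intro p s hp
      cases p with
      | nil => simp [subtermAt] at hp
      | cons i q => simp [subtermAt] at hp
  | const c =>
      intro p s hp
      cases p with
      | nil => simp [subtermAt] at hp
      | cons i q => simp [subtermAt] at hp
  | lam x _ ih =>
      intro p s hp
      cases p with
      | nil => simp [subtermAt] at hp
      | cons i q =>
          cases i with
          | zero => simp only [subtermAt] at hp ⊢; exact ih q s hp
          | succ j => simp [subtermAt] at hp
  | lamBang x _ ih =>
      intro p s hp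
      cases p with
      | nil => simp [subtermAt] at hp
      | cons i q =>
          cases i with
          | zero => simp only [subtermAt] at hp ⊢; exact ih q s hp
          | succ j => simp [subtermAt] at hp
  | app _ _ ih1 ih2 =>
      intro p s hp
      cases p with
      | nil => simp [subtermAt] at hp
      | cons i q =>
          cases i with
          | zero => simp only [subtermAt] at hp ⊢; exact ih1 q s hp
          | succ j =>
              cases j with
              | zero => change subtermAt _ (1 :: q) = _ at hp ⊢; simp only [subtermAt] at hp ⊢; exact ih2 q s hp
              | succ k => simp [subtermAt] at hp
  | bang t => intro p s hp; exact hp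

/-- Starting from a definite well-formed initial term, any
!-suspension subterm occurring during reduction is definite with respect to the
computational basis: in every state reachable from the basis configuration
|H;t⟩, at every subterm position of the computational register at which a
!-suspension !s occurs, the term !s is syntactically identical in all
configurations in the support. -/
theorem bang_suspensions_definite (H : List Term) (t : Term) (hwf : WellFormed t)
    (ψ : QState)
    (hreach : Relation.ReflTransGen StateStep (Finsupp.single (H, t) (1 : ℂ)) ψ) :
    ∀ (p : List ℕ) (s : Term), ∀ c ∈ ψ.support,
      subtermAt c.2 p = some (.bang s) →
      ∀ c' ∈ ψ.support, subtermAt c'.2 p = some (.bang s) := by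
  have h0 : Inv (Finsupp.single (H, t) (1 : ℂ)) := by
    constructor
    · intro c hc
      rw [mem_single_support hc]
      obtain ⟨L, N, hLN⟩ := hwf
      exact (WF_NL hLN).1
    · intro c₁ h1 c₂ h2
      rw [mem_single_support h1, mem_single_support h2]
      exact Ag.refl t
  have hInv := Inv_reach h0 hreach
  intro p s c hc hsub c' hc'
  exact Ag_subtermAt (hInv.2 c hc c' hc') p s hsub

end LambdaQ
end

section
/- The classical subset of the operational model with history tracking is reversible: the one-step transition relation on configurations (with terms identified up to renaming of bound variables, e.g. using De Bruijn indices) given by the rules app1, app2, β₁, β₂ and Id is injective, i.e., if configurations H₁;t₁ and H₂;t₂ each step to the same configuration s, then H₁;t₁ = H₂;t₂; at each step enough information is kept to reconstruct the previous step. -/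
namespace ClassicalLambda

/-- Terms of the classical lambda calculus in de Bruijn representation
(so that terms are automatically identified up to renaming of bound
variables), with constants (constant 0 is the placeholder ⊥). -/
inductive DTerm where
  | var (n : ℕ)
  | lam (b : DTerm)
  | app (a b : DTerm)
  | const (c : ℕ)
  deriving DecidableEq

open DTerm

/-- The placeholder symbol ⊥. -/
def ph : DTerm := const 0

/-- Shift the free variables ≥ k up by d. -/
def lift (d : ℕ) : ℕ → DTerm → DTerm
  | k, var n => if n < k then var n else var (n + d)
  | k, lam b => lam (lift d (k + 1) b)
  | k, app a b => app (lift d k a) (lift d k b)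
  | _, const c => const c

/-- Capture-avoiding substitution of v for the free variable k. -/
def substVar : DTerm → ℕ → DTerm → DTerm
  | var n, k, v => if n = k then lift k 0 v else if k < n then var (n - 1) else var n
  | lam b, k, v => lam (substVar b (k + 1) v)
  | app a b, k, v => app (substVar a k v) (substVar b k v)
  | const c, _, _ => const c

/-- β-reduction substitution: instantiate the outermost binder with v. -/
def instantiate (b v : DTerm) : DTerm := substVar b 0 v

/-- Whether the free variable k occurs in a term. -/
def occurs : ℕ → DTerm → Bool
  | k, var n => n = k
  | k, lam b => occurs (k + 1) b
  | k, app a b => occurs k a || occurs k b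
  | _, const _ => false

/-- The skeleton Ē_x (for x the free variable k): replace every maximal
subterm in which k does not occur free by the placeholder ⊥, keeping k. -/
def skel : ℕ → DTerm → DTerm
  | k, var n => if n = k then var n else ph
  | k, lam b => if occurs (k + 1) b then lam (skel (k + 1) b) else ph
  | k, app a b => if occurs k a || occurs k b then app (skel k a) (skel k b) else ph
  | _, const _ => ph


/-- Values: variables, constants, and abstractions. -/
def IsValue : DTerm → Prop
  | var _ => True
  | const _ => True
  | lam _ => True
  | app _ _ => False

/-- One step of the classical subset of the operational model with history
tracking: `TStep t h t'` means t ⟶ h;t', recording the history entry h. -/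
inductive TStep : DTerm → DTerm → DTerm → Prop
  | app1 {t₁ h t₁'} (t₂) : TStep t₁ h t₁' →
      TStep (app t₁ t₂) (app h ph) (app t₁' t₂)
  | app2 {v t₂ h t₂'} : IsValue v → TStep t₂ h t₂' →
      TStep (app v t₂) (app ph h) (app v t₂')
  | beta1 {E v} : IsValue v → occurs 0 E = true →
      TStep (app (lam E) v) (app (lam (skel 0 E)) ph) (instantiate E v)
  | beta2 {E v} : IsValue v → occurs 0 E = false →
      TStep (app (lam E) v) (app (lam ph) v) (instantiate E v)

/-- One step on configurations (history track, computational register):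
either a reduction step appending its history entry, or (Id) appending ⊥
when no other rule applies. -/
inductive ConfigStep : List DTerm × DTerm → List DTerm × DTerm → Prop
  | red {H t h t'} : TStep t h t' → ConfigStep (H, t) (H ++ [h], t')
  | idStep {H t} : (∀ h t', ¬ TStep t h t') → ConfigStep (H, t) (H ++ [ph], t)

/-!
The history entry determines the rule that fired and what it consumed. Entries of reduction
steps are applications, never the Id entry ⊥. In the entries `(h ⊥)` of app1, `(⊥ h)` of app2,
`((λ.Ē) ⊥)` of β₁ and `((λ.⊥) v)` of β₂, the sub-entry `h` is again an application and `Ē ≠ ⊥`,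
so the four shapes are distinct; for app1 and app2 one recurses. A β₂-entry keeps `v`. A
β₁-entry keeps `Ē`, which together with `E[v/x]` determines `E` (substitution is injective away
from the occurrences of `x`) and `v` (read off at any occurrence, shifting being injective).
-/

theorem lift_injective (d k : ℕ) : Function.Injective (lift d k) := by
  intro t₁ t₂ h
  induction t₁ generalizing k t₂ <;> cases t₂ <;> grind [lift]

theorem skel_eq_ph_iff (k : ℕ) (t : DTerm) : skel k t = ph ↔ occurs k t = false := by
  induction t generalizing k <;> grind [skel, occurs, ph]

theorem skel_lam_eq_skel_lam_iff (k : ℕ) (b₁ b₂ : DTerm) :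
    skel k (lam b₁) = skel k (lam b₂) ↔ skel (k + 1) b₁ = skel (k + 1) b₂ := by
  grind [skel, skel_eq_ph_iff, ph]

theorem skel_app_eq_skel_app_iff (k : ℕ) (a₁ b₁ a₂ b₂ : DTerm) :
    skel k (app a₁ b₁) = skel k (app a₂ b₂) ↔
      skel k a₁ = skel k a₂ ∧ skel k b₁ = skel k b₂ := by
  grind [skel, skel_eq_ph_iff, ph]

theorem eq_of_skel_eq_of_substVar_eq {k : ℕ} {E₁ E₂ v₁ v₂ : DTerm}
    (hskel : skel k E₁ = skel k E₂) (hsubst : substVar E₁ k v₁ = substVar E₂ k v₂) :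
    E₁ = E₂ ∧ (occurs k E₁ = true → v₁ = v₂) := by
  induction E₁ generalizing k E₂ with
  | var n =>
    cases E₂ with
    | var m =>
      by_cases hn : n = k <;> by_cases hm : m = k <;> simp_all [skel, substVar, occurs, ph]
      · exact lift_injective _ _ hsubst
      · split_ifs at hsubst <;> simp only [var.injEq] at hsubst <;> omega
    | _ => grind [skel, substVar, ph]
  | lam b ih =>
    cases E₂ with
    | lam b₂ =>
      obtain ⟨rfl, hv⟩ := ih ((skel_lam_eq_skel_lam_iff k b b₂).1 hskel) (lam.inj hsubst)
      exact ⟨rfl, hv⟩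
    | _ => grind [skel, substVar, ph]
  | app a b iha ihb =>
    cases E₂ with
    | app a₂ b₂ =>
      obtain ⟨hsa, hsb⟩ := (skel_app_eq_skel_app_iff k a b a₂ b₂).1 hskel
      obtain ⟨rfl, hva⟩ := iha hsa (app.inj hsubst).1
      obtain ⟨rfl, hvb⟩ := ihb hsb (app.inj hsubst).2
      refine ⟨rfl, fun ho => ?_⟩
      rcases Bool.or_eq_true_iff.1 ho with ho | ho
      exacts [hva ho, hvb ho]
    | _ => grind [skel, substVar, ph]
  | const c =>
    cases E₂ with
    | const c₂ => exact ⟨hsubst, nofun⟩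
    | _ => grind [skel, substVar, ph]

theorem TStep.exists_history_eq_app {t h t' : DTerm} (hs : TStep t h t') :
    ∃ a b, h = app a b := by
  cases hs <;> exact ⟨_, _, rfl⟩

theorem TStep.history_ne_ph {t h t' : DTerm} (hs : TStep t h t') : h ≠ ph := by
  obtain ⟨a, b, rfl⟩ := hs.exists_history_eq_app
  simp [ph]

theorem TStep.left_unique {t₁ h₁ t₁' t₂ h₂ t₂' : DTerm} (hs₁ : TStep t₁ h₁ t₁')
    (hs₂ : TStep t₂ h₂ t₂') (hh : h₁ = h₂) (ht : t₁' = t₂') : t₁ = t₂ := by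
  induction hs₁ generalizing t₂ h₂ t₂' with
  | app1 u hs₁ ih =>
    obtain ⟨x, y, rfl⟩ := hs₁.exists_history_eq_app
    cases hs₂ with
    | app1 u₂ hs₂ =>
      obtain ⟨hh₁, -⟩ := app.inj hh
      obtain ⟨ht₁, rfl⟩ := app.inj ht
      rw [ih hs₂ hh₁ ht₁]
    | _ => simp [ph] at hh
  | app2 hv hs₁ ih =>
    cases hs₂ with
    | app2 hv₂ hs₂ =>
      obtain ⟨-, hh₂⟩ := app.inj hh
      obtain ⟨rfl, ht₂⟩ := app.inj ht
      rw [ih hs₂ hh₂ ht₂]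
    | app1 u₂ hs₂ =>
      obtain ⟨x, y, rfl⟩ := hs₂.exists_history_eq_app
      simp [ph] at hh
    | _ => simp [ph] at hh
  | @beta1 E v hv ho =>
    cases hs₂ with
    | beta1 hv₂ ho₂ =>
      obtain ⟨rfl, hv⟩ := eq_of_skel_eq_of_substVar_eq (lam.inj (app.inj hh).1) ht
      rw [hv ho]
    | beta2 hv₂ ho₂ =>
      have := (skel_eq_ph_iff 0 E).1 (lam.inj (app.inj hh).1)
      simp [ho] at this
    | app1 u₂ hs₂ =>
      obtain ⟨x, y, rfl⟩ := hs₂.exists_history_eq_app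
      simp at hh
    | app2 hv₂ hs₂ => simp [ph] at hh
  | @beta2 E v hv ho =>
    cases hs₂ with
    | @beta2 E₂ v₂ hv₂ ho₂ =>
      obtain rfl : v = v₂ := (app.inj hh).2
      have hskel : skel 0 E = skel 0 E₂ := by
        rw [(skel_eq_ph_iff 0 E).2 ho, (skel_eq_ph_iff 0 E₂).2 ho₂]
      rw [(eq_of_skel_eq_of_substVar_eq hskel ht).1]
    | @beta1 E₂ v₂ hv₂ ho₂ =>
      have := (skel_eq_ph_iff 0 E₂).1 (lam.inj (app.inj hh).1).symm
      simp [ho₂] at this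
    | app1 u₂ hs₂ =>
      obtain ⟨x, y, rfl⟩ := hs₂.exists_history_eq_app
      simp at hh
    | app2 hv₂ hs₂ => simp [ph] at hh

theorem ConfigStep.exists_history {c s : List DTerm × DTerm} (hs : ConfigStep c s) :
    ∃ h, s.1 = c.1 ++ [h] ∧ (TStep c.2 h s.2 ∨ h = ph ∧ s.2 = c.2) := by
  cases hs with
  | red hs => exact ⟨_, rfl, .inl hs⟩
  | idStep => exact ⟨_, rfl, .inr ⟨rfl, rfl⟩⟩

/-- The classical subset of the operational model with
history tracking is reversible: the one-step transition relation on
configurations is injective — at each step enough information is kept to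
reconstruct the previous step. -/
theorem classical_step_injective (c₁ c₂ s : List DTerm × DTerm)
    (h₁ : ConfigStep c₁ s) (h₂ : ConfigStep c₂ s) : c₁ = c₂ := by
  obtain ⟨e₁, hH₁, hs₁⟩ := h₁.exists_history
  obtain ⟨e₂, hH₂, hs₂⟩ := h₂.exists_history
  obtain ⟨hH, he⟩ := List.append_inj' (hH₁.symm.trans hH₂) rfl
  obtain rfl : e₁ = e₂ := List.singleton_injective he
  refine Prod.ext hH ?_
  rcases hs₁ with hs₁ | ⟨rfl, ht₁⟩ <;> rcases hs₂ with hs₂ | ⟨he, ht₂⟩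
  · exact hs₁.left_unique hs₂ rfl rfl
  · exact absurd he hs₁.history_ne_ph
  · exact absurd rfl hs₂.history_ne_ph
  · exact ht₁.symm.trans ht₂

end ClassicalLambda
end

section
/- The history record of a β-step determines the redex: for terms E, E′ each containing the variable x free and values v, v′, if Ē_x = Ē′_x and E[v/x] = E′[v′/x], then E = E′ and v = v′. Here Ē_x is the skeleton of E obtained by replacing every maximal subterm not containing x free by the placeholder ⊥, and E[v/x] is capture-avoiding substitution. -/
/-!
Where the variable `k` occurs, the skeleton fixes the shape of `E` down to each occurrence, and
there `E[v/k]` exposes the shifted copy `lift k 0 v` of `v`; shifting is injective, so `v` is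
recovered. Where `k` does not occur, substitution merely renumbers free variables, which is
injective too.
-/

namespace ClassicalLambda

open DTerm

theorem occurs_eq_of_skel_eq {k : ℕ} {s t : DTerm} (h : skel k s = skel k t) :
    occurs k s = occurs k t := by
  grind [skel_eq_ph_iff]

theorem eq_of_substVar_eq_of_not_occurs {k : ℕ} {s t v w : DTerm}
    (hs : occurs k s = false) (ht : occurs k t = false)
    (h : substVar s k v = substVar t k w) : s = t := by
  induction s generalizing k t <;> cases t <;> grind [occurs, substVar]

theorem eq_of_skel_eq_var {k n : ℕ} {t : DTerm} (h : skel k t = var n) : t = var n := by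
  cases t <;> grind [skel, ph]

theorem exists_eq_lam_of_skel_eq_lam {k : ℕ} {t c : DTerm} (h : skel k t = lam c) :
    ∃ b, t = lam b ∧ skel (k + 1) b = c := by
  cases t <;> grind [skel, ph]

theorem exists_eq_app_of_skel_eq_app {k : ℕ} {t c d : DTerm} (h : skel k t = app c d) :
    ∃ a b, t = app a b ∧ skel k a = c ∧ skel k b = d := by
  cases t <;> grind [skel, ph]

-- The conclusion covers terms without `k`, so that the recursion passes through such subterms.
theorem eq_of_skel_eq_of_substVar_eq_s8 {k : ℕ} {s t v w : DTerm} (hskel : skel k s = skel k t)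
    (hsub : substVar s k v = substVar t k w) : s = t ∧ (occurs k s = true → v = w) := by
  cases hs : occurs k s
  · exact ⟨eq_of_substVar_eq_of_not_occurs hs (occurs_eq_of_skel_eq hskel ▸ hs) hsub, nofun⟩
  simp only [forall_const]
  match s, hs with
  | var n, hs =>
    obtain rfl : n = k := by simpa [occurs] using hs
    obtain rfl := eq_of_skel_eq_var (by simpa [skel] using hskel.symm)
    simp only [substVar, if_true] at hsub
    exact ⟨rfl, lift_injective _ _ hsub⟩
  | lam b, hs =>
    simp only [occurs] at hs
    obtain ⟨b', rfl, hb⟩ := exists_eq_lam_of_skel_eq_lam (by simpa [skel, hs] using hskel.symm)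
    simp only [substVar, lam.injEq] at hsub
    obtain ⟨rfl, hvw⟩ := eq_of_skel_eq_of_substVar_eq_s8 hb.symm hsub
    exact ⟨rfl, hvw hs⟩
  | app a b, hs =>
    simp only [occurs] at hs
    obtain ⟨a', b', rfl, ha, hb⟩ :=
      exists_eq_app_of_skel_eq_app (by simpa [skel, hs] using hskel.symm)
    simp only [substVar, app.injEq] at hsub
    obtain ⟨rfl, hva⟩ := eq_of_skel_eq_of_substVar_eq_s8 ha.symm hsub.1
    obtain ⟨rfl, hvb⟩ := eq_of_skel_eq_of_substVar_eq_s8 hb.symm hsub.2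
    rw [Bool.or_eq_true] at hs
    exact ⟨rfl, hs.elim hva hvb⟩

theorem skeleton_subst_injective_general (k : ℕ) (E E' v v' : DTerm)
    (hE : occurs k E = true)
    (hskel : skel k E = skel k E')
    (hsub : substVar E k v = substVar E' k v') :
    E = E' ∧ v = v' :=
  (eq_of_skel_eq_of_substVar_eq_s8 hskel hsub).imp_right (· hE)

/-- The history record of a β-step determines the redex: if
the free variable k occurs in both E and E′, v and v′ are values, the
skeletons Ē_k and Ē′_k agree, and E[v/k] = E′[v′/k], then E = E′ and v = v′. -/
theorem skeleton_subst_injective (k : ℕ) (E E' v v' : DTerm)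
    (hE : occurs k E = true) (hE' : occurs k E' = true)
    (hv : IsValue v) (hv' : IsValue v')
    (hskel : skel k E = skel k E')
    (hsub : substVar E k v = substVar E' k v') :
    E = E' ∧ v = v' :=
  skeleton_subst_injective_general k E E' v v' hE hskel hsub

end ClassicalLambda
end
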